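/- arXiv:2011.01364 — 6 statements merged into one kernel-verified Lean document; each statement's English description precedes it below -/
import Mathlib

section
/- Let n,d ≥ 1 and let A ∈ ℝ^{n×n}, B ∈ ℝ^{n×d}, Q ∈ ℝ^{n×n}, P ∈ ℝ^{n×n} with P symmetric, R ∈ ℝ^{d×d} symmetric, and K ∈ ℝ^{d×n}. Assume (R + BᵀPB)K + BᵀPA = 0 and Q + KᵀRK + (A+BK)ᵀP(A+BK) = P. Then for every matrix K̂ ∈ ℝ^{d×n} and every vector x ∈ ℝⁿ, xᵀ(Q + K̂ᵀRK̂)x + xᵀ(A+BK̂)ᵀP(A+BK̂)x − xᵀPx = xᵀ(K̂−K)ᵀ(R + BᵀPB)(K̂−K)x. -/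
open Matrix

theorem lqr_regret_quadratic_identity
    {n d : ℕ} (hn : 1 ≤ n) (hd : 1 ≤ d)
    (A : Matrix (Fin n) (Fin n) ℝ) (B : Matrix (Fin n) (Fin d) ℝ)
    (Q : Matrix (Fin n) (Fin n) ℝ) (P : Matrix (Fin n) (Fin n) ℝ)
    (R : Matrix (Fin d) (Fin d) ℝ) (K : Matrix (Fin d) (Fin n) ℝ)
    (hP : P.IsSymm) (hR : R.IsSymm)
    (hK : (R + Bᵀ * P * B) * K + Bᵀ * P * A = 0)
    (hRiccati : Q + Kᵀ * R * K + (A + B * K)ᵀ * P * (A + B * K) = P) :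
    ∀ (Khat : Matrix (Fin d) (Fin n) ℝ) (x : Fin n → ℝ),
      x ⬝ᵥ ((Q + Khatᵀ * R * Khat) *ᵥ x)
        + x ⬝ᵥ (((A + B * Khat)ᵀ * P * (A + B * Khat)) *ᵥ x)
        - x ⬝ᵥ (P *ᵥ x)
      = x ⬝ᵥ (((Khat - K)ᵀ * (R + Bᵀ * P * B) * (Khat - K)) *ᵥ x) := by
  intro Kh x
  have hPs : Pᵀ = P := hP
  have hRs : Rᵀ = R := hR
  set S : Matrix (Fin d) (Fin d) ℝ := R + Bᵀ * P * B with hSdef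
  set G : Matrix (Fin d) (Fin n) ℝ := Bᵀ * P * A with hGdef
  have hSs : Sᵀ = S := by
    simp [hSdef, transpose_add, transpose_mul, Matrix.mul_assoc, hPs, hRs]
  have hGt : Gᵀ = Aᵀ * P * B := by
    simp [hGdef, transpose_mul, Matrix.mul_assoc, hPs]
  have f1 : S * K = -G := eq_neg_of_add_eq_zero_left hK
  have f2 : Kᵀ * S = -Gᵀ := by
    calc Kᵀ * S = (Sᵀ * K)ᵀ := by rw [transpose_mul, transpose_transpose]
    _ = (S * K)ᵀ := by rw [hSs]
    _ = -Gᵀ := by rw [f1, transpose_neg]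
  have f3 : Kᵀ * G = Gᵀ * K := by
    have t1 : Kᵀ * S * K = -(Kᵀ * G) := by rw [Matrix.mul_assoc, f1, Matrix.mul_neg]
    have t2 : Kᵀ * S * K = -(Gᵀ * K) := by rw [f2, Matrix.neg_mul]
    exact neg_inj.mp (t1.symm.trans t2)
  -- expansion of (A + B*M)ᵀ * P * (A + B*M)
  have expand : ∀ M : Matrix (Fin d) (Fin n) ℝ,
      (A + B * M)ᵀ * P * (A + B * M)
        = Aᵀ * P * A + Gᵀ * M + Mᵀ * G + Mᵀ * (S - R) * M := by
    intro M
    have hSR : S - R = Bᵀ * P * B := by rw [hSdef]; abel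
    rw [hSR, hGdef, hGt]
    simp only [transpose_add, transpose_mul, Matrix.add_mul, Matrix.mul_add,
      Matrix.mul_assoc]
    abel
  have hP' : P = Q + Aᵀ * P * A + Gᵀ * K := by
    have e1 : Kᵀ * R * K + Kᵀ * (S - R) * K = Kᵀ * S * K := by
      simp only [Matrix.sub_mul, Matrix.mul_sub]; abel
    have e2 : Kᵀ * S * K = -(Gᵀ * K) := by
      rw [Matrix.mul_assoc, f1, Matrix.mul_neg, f3]
    calc P = Q + Kᵀ * R * K + (A + B * K)ᵀ * P * (A + B * K) := hRiccati.symm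
    _ = Q + Aᵀ * P * A + (Kᵀ * R * K + Kᵀ * (S - R) * K) + (Gᵀ * K + Kᵀ * G) := by
        rw [expand]; abel
    _ = Q + Aᵀ * P * A + Gᵀ * K := by rw [e1, e2, f3]; abel
  have key : Q + Khᵀ * R * Kh + (A + B * Kh)ᵀ * P * (A + B * Kh) - P
      = (Kh - K)ᵀ * S * (Kh - K) := by
    have rhs : (Kh - K)ᵀ * S * (Kh - K)
        = Khᵀ * S * Kh + Khᵀ * G + Gᵀ * Kh - Gᵀ * K := by
      have : (Kh - K)ᵀ * S * (Kh - K)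
          = Khᵀ * S * Kh - Khᵀ * (S * K) - (Kᵀ * S) * Kh + Kᵀ * (S * K) := by
        simp only [transpose_sub, Matrix.sub_mul, Matrix.mul_sub, Matrix.mul_assoc]
        abel
      rw [this, f1, f2, Matrix.mul_neg, Matrix.neg_mul, Matrix.mul_neg, f3]
      abel
    have lhs : Khᵀ * R * Kh + Khᵀ * (S - R) * Kh = Khᵀ * S * Kh := by
      simp only [Matrix.sub_mul, Matrix.mul_sub]; abel
    rw [expand, rhs]
    nth_rewrite 2 [hP']
    calc Q + Khᵀ * R * Kh + (Aᵀ * P * A + Gᵀ * Kh + Khᵀ * G + Khᵀ * (S - R) * Kh)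
        - (Q + Aᵀ * P * A + Gᵀ * K)
        = (Khᵀ * R * Kh + Khᵀ * (S - R) * Kh) + Khᵀ * G + Gᵀ * Kh - Gᵀ * K := by abel
    _ = Khᵀ * S * Kh + Khᵀ * G + Gᵀ * Kh - Gᵀ * K := by rw [lhs]
  calc x ⬝ᵥ ((Q + Khᵀ * R * Kh) *ᵥ x)
        + x ⬝ᵥ (((A + B * Kh)ᵀ * P * (A + B * Kh)) *ᵥ x)
        - x ⬝ᵥ (P *ᵥ x)
      = x ⬝ᵥ ((Q + Khᵀ * R * Kh + (A + B * Kh)ᵀ * P * (A + B * Kh) - P) *ᵥ x) := by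
        simp [add_mulVec, sub_mulVec, dotProduct_add, dotProduct_sub]
  _ = x ⬝ᵥ (((Kh - K)ᵀ * S * (Kh - K)) *ᵥ x) := by rw [key]
end

section
/- Let M be a real n×n matrix whose spectral radius satisfies ρ(M) < 1, and let (δ_t)_{t≥0} be a sequence of real n×n matrices with ‖δ_t‖ → 0 as t → ∞. Set ρ_M := (2 + ρ(M))/3, so that ρ_M < 1. Then there exists a constant C ≥ 0 such that for all natural numbers q < t, ‖(M+δ_{t−1})(M+δ_{t−2})⋯(M+δ_q)‖ ≤ C·ρ_M^{t−q}. In particular, there exists C ≥ 0 with ‖M^k‖ ≤ C·ρ_M^{k} for all k ≥ 0. -/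
/-!
Fix ρ(M) < ρ₁ := (1 + 2ρ(M))/3 < ρ_M. Gelfand's formula, applied to the complexification of `M`,
gives `‖M ^ k‖ ≤ C ρ₁ ^ k`, so the adapted norm `N X = sup_k ‖M ^ k X‖ / ρ₁ ^ k` (`weightedNorm`)
is finite, dominates `‖X‖`, and satisfies `N ((M + δ) X) ≤ (ρ₁ + C ‖δ‖) N X`. Since `‖δ s‖ → 0`,
these factors are at most `ρ_M` for all `s` beyond some `T`, and the finitely many earlier factors
only cost a constant.
-/

open Matrix Filter

/-- Operator 2-norm of a real matrix. -/
noncomputable def opNorm {m n : ℕ} (M : Matrix (Fin m) (Fin n) ℝ) : ℝ :=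
  ‖(Matrix.toEuclideanLin.trans LinearMap.toContinuousLinearMap) M‖

/-- Spectral radius of a real square matrix: the maximum modulus of its complex
eigenvalues. -/
noncomputable def specRad {n : ℕ} (M : Matrix (Fin n) (Fin n) ℝ) : ℝ :=
  (spectralRadius ℂ (M.map (algebraMap ℝ ℂ))).toReal

/-- The product `f (t-1) * f (t-2) * ⋯ * f s` of matrices with indices decreasing from
left to right; it is the identity matrix when `s ≥ t`. -/
noncomputable def prodDesc {n : ℕ} (f : ℕ → Matrix (Fin n) (Fin n) ℝ) (t s : ℕ) :
    Matrix (Fin n) (Fin n) ℝ :=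
  (((List.range' s (t - s)).reverse).map f).prod

open scoped Matrix.Norms.L2Operator Topology
open Finset

theorem spectrum.exists_norm_pow_le_mul_pow_of_spectralRadius_lt {A : Type*} [NormedRing A]
    [NormedAlgebra ℂ A] [CompleteSpace A] (a : A) {r : ℝ}
    (h : (spectralRadius ℂ a).toReal < r) :
    ∃ C, 0 ≤ C ∧ ∀ k : ℕ, ‖a ^ k‖ ≤ C * r ^ k := by
  have hr : 0 < r := ENNReal.toReal_nonneg.trans_lt h
  have hfin : spectralRadius ℂ a ≠ ⊤ :=
    ((spectralRadius_le_pow_nnnorm_pow_one_div ℂ a 0).trans_lt (by simp [ENNReal.mul_lt_top])).ne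
  have hev : ∀ᶠ k : ℕ in atTop, ‖a ^ k‖ ≤ r ^ k := by
    filter_upwards [(pow_norm_pow_one_div_tendsto_nhds_spectralRadius a).eventually_lt_const
      ((ENNReal.lt_ofReal_iff_toReal_lt hfin).mpr h), eventually_ge_atTop 1] with k hk hk1
    rw [ENNReal.ofReal_lt_ofReal_iff hr, one_div,
      Real.rpow_inv_lt_iff_of_pos (norm_nonneg _) hr.le (by positivity), Real.rpow_natCast] at hk
    exact hk.le
  have hO : (fun k => ‖a ^ k‖) =O[atTop] (fun k => r ^ k) :=
    Asymptotics.IsBigO.of_bound 1 (hev.mono fun k hk => by simpa [abs_of_pos hr] using hk)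
  obtain ⟨C, hC, hCbound⟩ := Asymptotics.bound_of_isBigO_nat_atTop hO
  refine ⟨C, hC.le, fun k => ?_⟩
  simpa [abs_of_pos hr] using hCbound (pow_ne_zero k hr.ne')

theorem Matrix.l2_opNorm_le_l2_opNorm_map_algebraMap {m n 𝕜 : Type*} [Fintype m] [Fintype n]
    [DecidableEq n] [RCLike 𝕜] (A : Matrix m n ℝ) : ‖A‖ ≤ ‖A.map (algebraMap ℝ 𝕜)‖ := by
  rw [l2_opNorm_def]
  refine ContinuousLinearMap.opNorm_le_bound _ (norm_nonneg _) fun x => ?_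
  have hx : ‖WithLp.toLp 2 (algebraMap ℝ 𝕜 ∘ x.ofLp)‖ = ‖x‖ := by
    simp [EuclideanSpace.norm_eq]
  have hAx := (A.map (algebraMap ℝ 𝕜)).l2_opNorm_mulVec (WithLp.toLp 2 (algebraMap ℝ 𝕜 ∘ x.ofLp))
  rw [hx, WithLp.ofLp_toLp, ← funext ((algebraMap ℝ 𝕜).map_mulVec A x.ofLp)] at hAx
  refine le_of_eq_of_le ?_ hAx
  simp [EuclideanSpace.norm_eq]

theorem exists_norm_pow_le_mul_pow_of_specRad_lt {n : ℕ} (M : Matrix (Fin n) (Fin n) ℝ) {r : ℝ}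
    (h : specRad M < r) : ∃ C, 0 ≤ C ∧ ∀ k : ℕ, ‖M ^ k‖ ≤ C * r ^ k := by
  obtain ⟨C, hC, hpow⟩ := spectrum.exists_norm_pow_le_mul_pow_of_spectralRadius_lt _ h
  refine ⟨C, hC, fun k => (l2_opNorm_le_l2_opNorm_map_algebraMap (𝕜 := ℂ) (M ^ k)).trans ?_⟩
  rw [Matrix.map_pow]
  exact hpow k

theorem exists_prod_Ico_le_mul_pow {a : ℕ → ℝ} {ρ : ℝ} (hρ : 0 < ρ) (ha : ∀ s, 0 ≤ a s)
    (hlim : ∀ᶠ s in atTop, a s ≤ ρ) :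
    ∃ K, 0 ≤ K ∧ ∀ q t, ∏ s ∈ Ico q t, a s ≤ K * ρ ^ (t - q) := by
  obtain ⟨T, hT⟩ := eventually_atTop.mp hlim
  set c : ℕ → ℝ := fun s => max (a s / ρ) 1
  have hc_eq_one : ∀ s ∉ range T, c s = 1 := fun s hs =>
    max_eq_right ((div_le_one hρ).mpr (hT s (by simpa using hs)))
  refine ⟨∏ s ∈ range T, c s, prod_nonneg fun s _ => zero_le_one.trans (le_max_right _ _),
    fun q t => ?_⟩
  calc ∏ s ∈ Ico q t, a s = ρ ^ (t - q) * ∏ s ∈ Ico q t, a s / ρ := by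
        rw [← Nat.card_Ico, ← prod_const, ← prod_mul_distrib]
        exact prod_congr rfl fun s _ => (mul_div_cancel₀ _ hρ.ne').symm
    _ ≤ ρ ^ (t - q) * ∏ s ∈ Ico q t ∪ range T, c s := by
        gcongr ρ ^ (t - q) * ?_
        calc ∏ s ∈ Ico q t, a s / ρ ≤ ∏ s ∈ Ico q t, c s :=
              prod_le_prod (fun s _ => div_nonneg (ha s) hρ.le) fun s _ => le_max_left _ _
          _ ≤ _ := prod_le_prod_of_subset_of_one_le subset_union_left
              (fun s _ => zero_le_one.trans (le_max_right _ _)) fun s _ _ => le_max_right _ _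
    _ = (∏ s ∈ range T, c s) * ρ ^ (t - q) := by
        rw [mul_comm, prod_subset subset_union_right fun s _ hs => hc_eq_one s hs]

section WeightedNorm

variable {R : Type*} [NormedRing R]

noncomputable def weightedNorm (m : R) (ρ : ℝ) (x : R) : ℝ :=
  ⨆ k : ℕ, ‖m ^ k * x‖ / ρ ^ k

variable {m : R} {ρ C : ℝ}

theorem bddAbove_range_norm_pow_mul_div (hρ : 0 < ρ) (hm : ∀ k : ℕ, ‖m ^ k‖ ≤ C * ρ ^ k)
    (x : R) : BddAbove (Set.range fun k : ℕ => ‖m ^ k * x‖ / ρ ^ k) := by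
  refine ⟨C * ‖x‖, ?_⟩
  rintro _ ⟨k, rfl⟩
  rw [div_le_iff₀ (pow_pos hρ k)]
  calc ‖m ^ k * x‖ ≤ ‖m ^ k‖ * ‖x‖ := norm_mul_le _ _
    _ ≤ C * ρ ^ k * ‖x‖ := by gcongr; exact hm k
    _ = C * ‖x‖ * ρ ^ k := by ring

theorem norm_pow_mul_div_le_weightedNorm (hρ : 0 < ρ) (hm : ∀ k : ℕ, ‖m ^ k‖ ≤ C * ρ ^ k)
    (x : R) (k : ℕ) : ‖m ^ k * x‖ / ρ ^ k ≤ weightedNorm m ρ x :=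
  le_ciSup (bddAbove_range_norm_pow_mul_div hρ hm x) k

theorem norm_le_weightedNorm (hρ : 0 < ρ) (hm : ∀ k : ℕ, ‖m ^ k‖ ≤ C * ρ ^ k) (x : R) :
    ‖x‖ ≤ weightedNorm m ρ x := by
  simpa using norm_pow_mul_div_le_weightedNorm hρ hm x 0

theorem weightedNorm_add_mul_le (hρ : 0 < ρ) (hm : ∀ k : ℕ, ‖m ^ k‖ ≤ C * ρ ^ k) (d x : R) :
    weightedNorm m ρ ((m + d) * x) ≤ (ρ + C * ‖d‖) * weightedNorm m ρ x := by
  refine ciSup_le fun k => ?_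
  rw [div_le_iff₀ (pow_pos hρ k)]
  have hshift : ‖m ^ (k + 1) * x‖ ≤ weightedNorm m ρ x * ρ ^ (k + 1) :=
    (div_le_iff₀ (pow_pos hρ _)).mp (norm_pow_mul_div_le_weightedNorm hρ hm x (k + 1))
  have hx := norm_le_weightedNorm hρ hm x
  calc ‖m ^ k * ((m + d) * x)‖ = ‖m ^ (k + 1) * x + m ^ k * (d * x)‖ := by
        rw [add_mul, mul_add, pow_succ, mul_assoc]
    _ ≤ ‖m ^ (k + 1) * x‖ + ‖m ^ k‖ * (‖d‖ * ‖x‖) :=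
        norm_add_le_of_le le_rfl ((norm_mul_le _ _).trans (by gcongr; exact norm_mul_le _ _))
    _ ≤ weightedNorm m ρ x * ρ ^ (k + 1) + ‖m ^ k‖ * (‖d‖ * weightedNorm m ρ x) := by
        gcongr
    _ ≤ weightedNorm m ρ x * ρ ^ (k + 1) + C * ρ ^ k * (‖d‖ * weightedNorm m ρ x) :=
        add_le_add_right (mul_le_mul_of_nonneg_right (hm k)
          (mul_nonneg (norm_nonneg d) ((norm_nonneg x).trans hx))) _
    _ = (ρ + C * ‖d‖) * weightedNorm m ρ x * ρ ^ k := by ring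

end WeightedNorm

section prodDesc

variable {n : ℕ}

theorem prodDesc_self (f : ℕ → Matrix (Fin n) (Fin n) ℝ) (q : ℕ) : prodDesc f q q = 1 := by
  simp [prodDesc]

theorem prodDesc_succ (f : ℕ → Matrix (Fin n) (Fin n) ℝ) {q t : ℕ} (hqt : q ≤ t) :
    prodDesc f (t + 1) q = f t * prodDesc f t q := by
  rw [prodDesc, prodDesc, show t + 1 - q = t - q + 1 by omega, List.range'_concat,
    List.reverse_append, show q + 1 * (t - q) = t by omega]
  simp

theorem apply_prodDesc_le_prod_Ico_mul {f : ℕ → Matrix (Fin n) (Fin n) ℝ}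
    {N : Matrix (Fin n) (Fin n) ℝ → ℝ} {a : ℕ → ℝ} (ha : ∀ s, 0 ≤ a s)
    (hf : ∀ s X, N (f s * X) ≤ a s * N X) {q t : ℕ} (hqt : q ≤ t) :
    N (prodDesc f t q) ≤ (∏ s ∈ Ico q t, a s) * N 1 := by
  induction t, hqt using Nat.le_induction with
  | base => simp [prodDesc_self]
  | succ t hqt ih =>
    rw [prodDesc_succ f hqt, prod_Ico_succ_top hqt]
    calc N (f t * prodDesc f t q) ≤ a t * N (prodDesc f t q) := hf t _
      _ ≤ a t * ((∏ s ∈ Ico q t, a s) * N 1) := mul_le_mul_of_nonneg_left ih (ha t)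
      _ = (∏ s ∈ Ico q t, a s) * a t * N 1 := by ring

end prodDesc

theorem perturbed_product_exponential_decay
    {n : ℕ} (M : Matrix (Fin n) (Fin n) ℝ)
    (hM : specRad M < 1)
    (δ : ℕ → Matrix (Fin n) (Fin n) ℝ)
    (hδ : Tendsto (fun t => opNorm (δ t)) atTop (nhds 0)) :
    (∃ C : ℝ, 0 ≤ C ∧ ∀ q t : ℕ, q < t →
        opNorm (prodDesc (fun k => M + δ k) t q)
          ≤ C * ((2 + specRad M) / 3) ^ (t - q))
    ∧ (∃ C : ℝ, 0 ≤ C ∧ ∀ k : ℕ,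
        opNorm (M ^ k) ≤ C * ((2 + specRad M) / 3) ^ k) := by
  have hr : 0 ≤ specRad M := ENNReal.toReal_nonneg
  set ρ := (2 + specRad M) / 3 with hρ_def
  set ρ₁ := (1 + 2 * specRad M) / 3 with hρ₁_def
  have hρ₁ : 0 < ρ₁ := by positivity
  have hρ₁ρ : ρ₁ < ρ := by linarith
  obtain ⟨C, hC, hpow⟩ := exists_norm_pow_le_mul_pow_of_specRad_lt M
    (show specRad M < ρ₁ by linarith)
  set a : ℕ → ℝ := fun s => ρ₁ + C * ‖δ s‖
  have ha : ∀ s, 0 ≤ a s := fun s => by positivity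
  have hsmall : ∀ᶠ s in atTop, a s ≤ ρ :=
    (tendsto_const_nhds.add (hδ.const_mul C)).eventually (ge_mem_nhds (by simpa using hρ₁ρ))
  obtain ⟨K, hK, hprod⟩ := exists_prod_Ico_le_mul_pow (hρ₁.trans hρ₁ρ) ha hsmall
  have hN1 := (norm_nonneg _).trans (norm_le_weightedNorm hρ₁ hpow 1)
  refine ⟨⟨K * weightedNorm M ρ₁ 1, by positivity, fun q t hqt => ?_⟩,
    exists_norm_pow_le_mul_pow_of_specRad_lt M (by linarith)⟩
  calc ‖prodDesc (fun k => M + δ k) t q‖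
      ≤ weightedNorm M ρ₁ (prodDesc (fun k => M + δ k) t q) := norm_le_weightedNorm hρ₁ hpow _
    _ ≤ (∏ s ∈ Ico q t, a s) * weightedNorm M ρ₁ 1 :=
        apply_prodDesc_le_prod_Ico_mul ha (fun s => weightedNorm_add_mul_le hρ₁ hpow (δ s)) hqt.le
    _ ≤ K * ρ ^ (t - q) * weightedNorm M ρ₁ 1 := by gcongr; exact hprod q t
    _ = K * weightedNorm M ρ₁ 1 * ρ ^ (t - q) := by ring
end

section
/- Let Z be a random m×m real matrix, entrywise integrable, which is almost surely symmetric positive semidefinite, and suppose that its entrywise expectation E[Z] is positive definite. Then for every δ ∈ (0,1], P( Z ⋠ (m/δ)·E[Z] ) ≤ δ, where for symmetric real matrices X ⪯ Y means that Y − X is positive semidefinite. -/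
/-!
Put `A = 𝔼[Z]` and `X = tr (A⁻¹ Z)`. Conjugating by `A^{-1/2}` and using `N ⪯ tr N • 1` for
`N ⪰ 0` gives `Z ⪯ X • A` pointwise, so `Z ⋠ c • A` forces `c < X`. Moreover `X ≥ 0` and
`𝔼[X] = tr (A⁻¹ A) = m`, so Markov's inequality at `c = m / δ` bounds the probability by `δ`.
-/

open Matrix MeasureTheory

open scoped MatrixOrder

namespace Matrix

variable {n : Type*} [Fintype n] [DecidableEq n]

lemma PosSemidef.le_trace_smul_one {N : Matrix n n ℝ} (hN : N.PosSemidef) :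
    N ≤ N.trace • (1 : Matrix n n ℝ) := by
  rw [← Algebra.algebraMap_eq_smul_one]
  refine le_algebraMap_of_spectrum_le fun x hx => ?_
  rw [hN.isHermitian.spectrum_real_eq_range_eigenvalues] at hx
  obtain ⟨i, rfl⟩ := hx
  rw [hN.isHermitian.trace_eq_sum_eigenvalues]
  simp only [RCLike.ofReal_real_eq_id, id]
  exact Finset.single_le_sum (fun j _ => hN.eigenvalues_nonneg j) (Finset.mem_univ i)

lemma PosSemidef.trace_mul_nonneg {P Q : Matrix n n ℝ} (hP : P.PosSemidef) (hQ : Q.PosSemidef) :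
    0 ≤ (P * Q).trace := by
  obtain ⟨S, hS, rfl⟩ : ∃ S : Matrix n n ℝ, IsSelfAdjoint S ∧ P = S * S :=
    ⟨CFC.sqrt P, (CFC.sqrt_nonneg P).isSelfAdjoint, (CFC.sqrt_mul_sqrt_self P hP.nonneg).symm⟩
  rw [Matrix.mul_assoc, trace_mul_comm]
  exact ((hS.conjugate_nonneg hQ.nonneg).posSemidef).trace_nonneg

lemma PosSemidef.le_trace_inv_mul_smul {A Z : Matrix n n ℝ} (hA : A.PosDef) (hZ : Z.PosSemidef) :
    Z ≤ (A⁻¹ * Z).trace • A := by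
  set T := CFC.sqrt A
  have hT : IsSelfAdjoint T := (CFC.sqrt_nonneg A).isSelfAdjoint
  have hTT : T * T = A := CFC.sqrt_mul_sqrt_self A hA.posSemidef.nonneg
  have hTdet : IsUnit T.det :=
    isUnit_of_mul_isUnit_left (by rw [← det_mul, hTT]; exact hA.isUnit.map detMonoidHom)
  have hTinv : IsSelfAdjoint T⁻¹ := by
    rw [IsSelfAdjoint, star_eq_conjTranspose, conjTranspose_nonsing_inv, ← star_eq_conjTranspose,
      hT.star_eq]
  set N := T⁻¹ * Z * T⁻¹
  have hN : N.PosSemidef := (hTinv.conjugate_nonneg hZ.nonneg).posSemidef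
  have hTNT : T * N * T = Z := by
    simp only [N, ← Matrix.mul_assoc, mul_nonsing_inv T hTdet, Matrix.one_mul]
    rw [Matrix.mul_assoc, nonsing_inv_mul T hTdet, Matrix.mul_one]
  have htrace : N.trace = (A⁻¹ * Z).trace := by
    rw [← hTT, mul_inv_rev, trace_mul_cycle, Matrix.mul_assoc]
  calc Z = T * N * T := hTNT.symm
    _ ≤ T * (N.trace • 1) * T := hT.conjugate_le_conjugate hN.le_trace_smul_one
    _ = (A⁻¹ * Z).trace • A := by rw [Matrix.mul_smul, Matrix.smul_mul, Matrix.mul_one, hTT, htrace]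

lemma lt_trace_inv_mul_of_not_le {A Z : Matrix n n ℝ} (hA : A.PosDef) (hZ : Z.PosSemidef) {c : ℝ}
    (h : ¬ Z ≤ c • A) : c < (A⁻¹ * Z).trace := by
  contrapose! h
  exact (hZ.le_trace_inv_mul_smul hA).trans (smul_le_smul_of_nonneg_right h hA.posSemidef.nonneg)

end Matrix

section Integral

variable {Ω n : Type*} [Fintype n] [MeasurableSpace Ω] {μ : Measure Ω} {Z : Ω → Matrix n n ℝ}

lemma Matrix.integrable_trace_mul (hZ : ∀ i j, Integrable (fun ω => Z ω i j) μ)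
    (M : Matrix n n ℝ) : Integrable (fun ω => (M * Z ω).trace) μ := by
  simp only [trace, diag_apply, mul_apply]
  exact integrable_finsetSum _ fun i _ => integrable_finsetSum _ fun j _ => (hZ j i).const_mul _

lemma Matrix.integral_trace_mul (hZ : ∀ i j, Integrable (fun ω => Z ω i j) μ)
    (M : Matrix n n ℝ) :
    ∫ ω, (M * Z ω).trace ∂μ = (M * Matrix.of fun i j => ∫ ω, Z ω i j ∂μ).trace := by
  simp only [trace, diag_apply, mul_apply, of_apply]
  refine (integral_finsetSum _ fun i _ => integrable_finsetSum _ fun j _ =>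
    (hZ j i).const_mul _).trans (Finset.sum_congr rfl fun i _ => ?_)
  refine (integral_finsetSum _ fun j _ => (hZ j i).const_mul _).trans ?_
  simp only [integral_const_mul]

end Integral

lemma MeasureTheory.meas_ge_le_ofReal_integral_div {α : Type*} [MeasurableSpace α]
    {μ : Measure α} [IsFiniteMeasure μ] {f : α → ℝ} (hf_nonneg : 0 ≤ᵐ[μ] f)
    (hf_int : Integrable f μ) {ε : ℝ} (hε : 0 < ε) :
    μ {x | ε ≤ f x} ≤ ENNReal.ofReal ((∫ x, f x ∂μ) / ε) := by
  rw [← ofReal_measureReal]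
  refine ENNReal.ofReal_le_ofReal ?_
  rw [le_div_iff₀' hε]
  exact mul_meas_ge_le_integral_of_nonneg hf_nonneg hf_int ε

theorem markov_matrix_loewner_bound_general
    {Ω : Type*} [MeasurableSpace Ω] (P : Measure Ω) [IsProbabilityMeasure P]
    {m : ℕ} (Z : Ω → Matrix (Fin m) (Fin m) ℝ)
    (hint : ∀ i j, Integrable (fun ω => Z ω i j) P)
    (hpsd : ∀ᵐ ω ∂P, (Z ω).PosSemidef)
    (hpd : (Matrix.of fun i j => ∫ ω, Z ω i j ∂P).PosDef) :
    ∀ δ : ℝ, 0 < δ → δ ≤ 1 →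
      P {ω | ¬ (((m : ℝ) / δ) • (Matrix.of fun i j => ∫ ω' , Z ω' i j ∂P)
                  - Z ω).PosSemidef}
        ≤ ENNReal.ofReal δ := by
  intro δ hδ _
  rcases m.eq_zero_or_pos with rfl | hm
  · simp [Subsingleton.elim _ (0 : Matrix (Fin 0) (Fin 0) ℝ), PosSemidef.zero]
  set A := Matrix.of fun i j => ∫ ω, Z ω i j ∂P
  have hc : 0 < (m : ℝ) / δ := by positivity
  calc _ ≤ P {ω | (m : ℝ) / δ ≤ (A⁻¹ * Z ω).trace} := measure_mono_ae <| by
        filter_upwards [hpsd] with ω hZ hnot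
        exact (lt_trace_inv_mul_of_not_le hpd hZ hnot).le
    _ ≤ ENNReal.ofReal ((∫ ω, (A⁻¹ * Z ω).trace ∂P) / (m / δ)) :=
        meas_ge_le_ofReal_integral_div
          (by filter_upwards [hpsd] with ω hZ using hpd.inv.posSemidef.trace_mul_nonneg hZ)
          (integrable_trace_mul hint _) hc
    _ = ENNReal.ofReal δ := by
        rw [integral_trace_mul hint, nonsing_inv_mul _ (isUnit_iff_isUnit_det _ |>.mp hpd.isUnit),
          trace_one, Fintype.card_fin]
        field_simp

theorem markov_matrix_loewner_bound
    {Ω : Type*} [MeasurableSpace Ω] (P : Measure Ω) [IsProbabilityMeasure P]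
    {m : ℕ} (Z : Ω → Matrix (Fin m) (Fin m) ℝ)
    (hmeas : ∀ i j, Measurable (fun ω => Z ω i j))
    (hint : ∀ i j, Integrable (fun ω => Z ω i j) P)
    (hpsd : ∀ᵐ ω ∂P, (Z ω).PosSemidef)
    (hpd : (Matrix.of fun i j => ∫ ω, Z ω i j ∂P).PosDef) :
    ∀ δ : ℝ, 0 < δ → δ ≤ 1 →
      P {ω | ¬ (((m : ℝ) / δ) • (Matrix.of fun i j => ∫ ω' , Z ω' i j ∂P)
                  - Z ω).PosSemidef}
        ≤ ENNReal.ofReal δ :=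
  markov_matrix_loewner_bound_general P Z hint hpsd hpd
end

section
/- Let Σ be an n×n real symmetric positive definite matrix, K a d×n real matrix, and σ_u ∈ ℝ. Let M be the (n+d)×(n+d) symmetric block matrix M = [[Σ, ΣKᵀ],[KΣ, KΣKᵀ + σ_u²·I_d]]. Then for every vector v ∈ ℝ^{n+d} with ‖v‖ = 1, vᵀMv ≥ σ_u²·min( 1/2, λ_min(Σ)/(2·‖KΣKᵀ‖ + σ_u²) ); equivalently, the smallest eigenvalue of M is at least σ_u²·min( 1/2, λ_min(Σ)/(2·‖KΣKᵀ‖ + σ_u²) ). -/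
/-!
Write `v = (x, y)`, `q w = wᵀ Σ w`, `b = Kᵀ y` and `B = ‖K Σ Kᵀ‖`. The quadratic form of the block
matrix is `q (x + b) + σ² |y|²`, and `q b = yᵀ (K Σ Kᵀ) y ≤ B |y|²`. Young's inequality for the
form `q`, with weights `2B` and `σ²`, bounds `σ² q x = σ² q ((x + b) - b)` by
`(2B + σ²) (q (x + b) + σ² |y|² / 2)`, while `λ_min(Σ) |x|² ≤ q x`. This controls the `x`-part of
`|v|²` with half of `σ² |y|²` left over for the `y`-part.
-/

open Matrix

/-- Young's inequality `q (z - b) ≤ (1 + c / s) q z + (1 + s / c) q b` with the denominators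
cleared; proved through Cauchy–Schwarz, so that `c = 0` or `s = 0` need no separate case. -/
lemma LinearMap.BilinForm.mul_apply_sub_sub_le {M : Type*} [AddCommGroup M] [Module ℝ M]
    {β : LinearMap.BilinForm ℝ M} (hβ : ∀ x, 0 ≤ β x x) (hsymm : LinearMap.IsSymm β) {z b : M}
    {c s r : ℝ} (hc : 0 ≤ c) (hs : 0 ≤ s) (hr : 0 ≤ r) (hb : β b b ≤ c * r) :
    s * β (z - b) (z - b) ≤ (c + s) * (β z z + s * r) := by
  have hexpand : β (z - b) (z - b) = β z z - 2 * β z b + β b b := by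
    have hzb := hsymm.eq b z
    simp only [map_sub, LinearMap.sub_apply, RingHom.id_apply] at hzb ⊢
    rw [hzb]
    ring
  have hcs : (2 * s * β z b) ^ 2 ≤ (c * β z z + s ^ 2 * r) ^ 2 :=
    calc (2 * s * β z b) ^ 2 = 4 * s ^ 2 * β z b ^ 2 := by ring
      _ ≤ 4 * s ^ 2 * (β z z * (c * r)) := by
        gcongr
        exact (apply_sq_le_of_symm β hβ hsymm z b).trans (by gcongr; exact hβ z)
      _ ≤ (c * β z z + s ^ 2 * r) ^ 2 := by nlinarith [sq_nonneg (c * β z z - s ^ 2 * r)]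
  have hcross : -(2 * s * β z b) ≤ c * β z z + s ^ 2 * r :=
    neg_le.mp (abs_le_of_sq_le_sq' hcs (by have := hβ z; positivity)).1
  rw [hexpand]
  nlinarith [mul_le_mul_of_nonneg_left hb hs]

namespace Matrix

lemma posSemidef_sub_smul_one_iff {ι : Type*} [Fintype ι] [DecidableEq ι] {A : Matrix ι ι ℝ}
    (hA : A.IsHermitian) (μ : ℝ) :
    (A - μ • 1).PosSemidef ↔ ∀ x, μ * (x ⬝ᵥ x) ≤ x ⬝ᵥ A *ᵥ x := by
  have hherm : (A - μ • 1).IsHermitian := hA.sub (isHermitian_one.smul (IsSelfAdjoint.all μ))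
  simp only [posSemidef_iff_dotProduct_mulVec, hherm, true_and, star_trivial, sub_mulVec,
    dotProduct_sub, smul_mulVec, one_mulVec, dotProduct_smul, smul_eq_mul, sub_nonneg]

open scoped MatrixOrder in
lemma IsHermitian.iInf_eigenvalues_mul_dotProduct_le {ι : Type*} [Fintype ι] [DecidableEq ι]
    {A : Matrix ι ι ℝ} (hA : A.IsHermitian) (x : ι → ℝ) :
    (⨅ i, hA.eigenvalues i) * (x ⬝ᵥ x) ≤ x ⬝ᵥ A *ᵥ x := by
  refine (posSemidef_sub_smul_one_iff hA _).1 ?_ x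
  rw [← le_iff, ← Algebra.algebraMap_eq_smul_one]
  refine algebraMap_le_of_le_spectrum (fun μ hμ => ?_) hA.isSelfAdjoint
  obtain ⟨i, rfl⟩ := hA.spectrum_real_eq_range_eigenvalues ▸ hμ
  exact ciInf_le (Finite.bddBelow_range _) i

variable {R ι κ : Type*} [CommRing R] [Fintype ι]

lemma sumElim_dotProduct_fromBlocks_mulVec_sumElim [Fintype κ] [DecidableEq κ]
    (S : Matrix ι ι R) (K : Matrix κ ι R) (c : R) (x : ι → R) (y : κ → R) :
    Sum.elim x y ⬝ᵥ fromBlocks S (S * Kᵀ) (K * S) (K * S * Kᵀ + c • 1) *ᵥ Sum.elim x y =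
      (x + Kᵀ *ᵥ y) ⬝ᵥ S *ᵥ (x + Kᵀ *ᵥ y) + c * (y ⬝ᵥ y) := by
  have hK (z : ι → R) : y ⬝ᵥ K *ᵥ z = (Kᵀ *ᵥ y) ⬝ᵥ z := by
    rw [dotProduct_mulVec, ← mulVec_transpose]
  simp only [fromBlocks_mulVec, Sum.elim_comp_inl, Sum.elim_comp_inr, sumElim_dotProduct_sumElim,
    add_mulVec, mulVec_add, dotProduct_add, add_dotProduct, ← mulVec_mulVec, smul_mulVec,
    one_mulVec, dotProduct_smul, smul_eq_mul, hK]
  ring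

lemma isSymm_fromBlocks_mul_transpose [DecidableEq κ] {S : Matrix ι ι R} (hS : S.IsSymm)
    (K : Matrix κ ι R) (c : R) :
    (fromBlocks S (S * Kᵀ) (K * S) (K * S * Kᵀ + c • 1)).IsSymm := by
  refine hS.fromBlocks (by rw [transpose_mul, transpose_transpose, hS.eq]) ?_
  refine .add ?_ (isSymm_one.smul c)
  simp [IsSymm, transpose_mul, hS.eq, Matrix.mul_assoc]

end Matrix

lemma dotProduct_mulVec_le_opNorm_mul {m : ℕ} (A : Matrix (Fin m) (Fin m) ℝ) (x : Fin m → ℝ) :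
    x ⬝ᵥ A *ᵥ x ≤ opNorm A * (x ⬝ᵥ x) := by
  set T := toEuclideanCLM (n := Fin m) (𝕜 := ℝ) A
  set x' := WithLp.toLp 2 x
  have hT : opNorm A = ‖T‖ := rfl
  have hx : x ⬝ᵥ x = ‖x'‖ ^ 2 := by
    rw [← real_inner_self_eq_norm_sq, EuclideanSpace.inner_toLp_toLp, star_trivial]
  calc x ⬝ᵥ A *ᵥ x = inner ℝ x' (T x') := (inner_toEuclideanCLM A x' x').symm
    _ ≤ ‖x'‖ * ‖T x'‖ := real_inner_le_norm _ _
    _ ≤ ‖x'‖ * (‖T‖ * ‖x'‖) := by gcongr; exact T.le_opNorm x'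
    _ = opNorm A * (x ⬝ᵥ x) := by rw [hT, hx]; ring

lemma quadForm_add_transpose_mulVec_lower_bound {n d : ℕ} {S : Matrix (Fin n) (Fin n) ℝ}
    (hS : S.PosSemidef) (K : Matrix (Fin d) (Fin n) ℝ) (σu : ℝ) (x : Fin n → ℝ) (y : Fin d → ℝ) :
    σu ^ 2 * min (1 / 2)
        ((⨅ i, hS.isHermitian.eigenvalues i) / (2 * opNorm (K * S * Kᵀ) + σu ^ 2)) *
        (x ⬝ᵥ x + y ⬝ᵥ y)
      ≤ (x + Kᵀ *ᵥ y) ⬝ᵥ S *ᵥ (x + Kᵀ *ᵥ y) + σu ^ 2 * (y ⬝ᵥ y) := by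
  set lam := ⨅ i, hS.isHermitian.eigenvalues i
  set B := opNorm (K * S * Kᵀ)
  set s := σu ^ 2
  set z := x + Kᵀ *ᵥ y
  set β := toBilin' S
  have hβ_apply (u v : Fin n → ℝ) : β u v = u ⬝ᵥ S *ᵥ v := toBilin'_apply' S u v
  have hβ (u : Fin n → ℝ) : 0 ≤ β u u := by
    simpa [hβ_apply] using hS.dotProduct_mulVec_nonneg u
  have hβsymm : LinearMap.IsSymm β := LinearMap.BilinForm.isSymm_iff.1 <|
    isSymm_toBilin'_iff_isSymm.2 (isHermitian_iff_isSymm.1 hS.isHermitian)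
  have hB : 0 ≤ B := norm_nonneg _
  have hs : 0 ≤ s := sq_nonneg σu
  have hX : 0 ≤ x ⬝ᵥ x := by simpa using dotProduct_self_star_nonneg x
  have hY : 0 ≤ y ⬝ᵥ y := by simpa using dotProduct_self_star_nonneg y
  have hKy : β (Kᵀ *ᵥ y) (Kᵀ *ᵥ y) ≤ (2 * B) * ((y ⬝ᵥ y) / 2) :=
    calc β (Kᵀ *ᵥ y) (Kᵀ *ᵥ y) = y ⬝ᵥ (K * S * Kᵀ) *ᵥ y := by
          rw [hβ_apply, ← mulVec_mulVec, ← mulVec_mulVec, dotProduct_mulVec y K,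
            ← mulVec_transpose]
      _ ≤ B * (y ⬝ᵥ y) := dotProduct_mulVec_le_opNorm_mul _ y
      _ = (2 * B) * ((y ⬝ᵥ y) / 2) := by ring
  have hyoung : s * (x ⬝ᵥ S *ᵥ x) ≤ (2 * B + s) * (z ⬝ᵥ S *ᵥ z + s * ((y ⬝ᵥ y) / 2)) := by
    simpa [hβ_apply, z] using
      LinearMap.BilinForm.mul_apply_sub_sub_le hβ hβsymm (z := z) (by positivity) hs
        (by positivity) hKy
  have hz : 0 ≤ z ⬝ᵥ S *ᵥ z := hβ_apply z z ▸ hβ z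
  have hxpart : s * min (1 / 2) (lam / (2 * B + s)) * (x ⬝ᵥ x)
      ≤ z ⬝ᵥ S *ᵥ z + s * ((y ⬝ᵥ y) / 2) :=
    calc _ ≤ s * (lam / (2 * B + s)) * (x ⬝ᵥ x) := by
          gcongr
          exact min_le_right _ _
      _ = s * (lam * (x ⬝ᵥ x)) / (2 * B + s) := by ring
      _ ≤ s * (x ⬝ᵥ S *ᵥ x) / (2 * B + s) := by
          gcongr
          exact hS.isHermitian.iInf_eigenvalues_mul_dotProduct_le x
      _ ≤ _ := div_le_of_le_mul₀ (by positivity) (by positivity) (by linarith)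
  have hypart : s * min (1 / 2) (lam / (2 * B + s)) * (y ⬝ᵥ y) ≤ s * ((y ⬝ᵥ y) / 2) := by
    have : min (1 / 2) (lam / (2 * B + s)) ≤ 1 / 2 := min_le_left _ _
    nlinarith [mul_nonneg hs hY]
  linarith

theorem block_matrix_min_eigenvalue_bound
    {n d : ℕ} (S : Matrix (Fin n) (Fin n) ℝ) (K : Matrix (Fin d) (Fin n) ℝ)
    (σu : ℝ) (hS : S.PosDef) :
    (∀ v : (Fin n ⊕ Fin d) → ℝ, (∑ i, v i ^ 2) = 1 →
        σu ^ 2 * min (1 / 2)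
            ((⨅ i, hS.1.eigenvalues i) / (2 * opNorm (K * S * Kᵀ) + σu ^ 2))
          ≤ v ⬝ᵥ ((Matrix.fromBlocks S (S * Kᵀ) (K * S)
              (K * S * Kᵀ + σu ^ 2 • (1 : Matrix (Fin d) (Fin d) ℝ))) *ᵥ v)) ∧
      (Matrix.fromBlocks S (S * Kᵀ) (K * S)
            (K * S * Kᵀ + σu ^ 2 • (1 : Matrix (Fin d) (Fin d) ℝ))
          - (σu ^ 2 * min (1 / 2)
              ((⨅ i, hS.1.eigenvalues i) /
                (2 * opNorm (K * S * Kᵀ) + σu ^ 2))) • 1).PosSemidef := by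
  set M := fromBlocks S (S * Kᵀ) (K * S) (K * S * Kᵀ + σu ^ 2 • (1 : Matrix (Fin d) (Fin d) ℝ))
  set μ := σu ^ 2 * min (1 / 2) ((⨅ i, hS.1.eigenvalues i) / (2 * opNorm (K * S * Kᵀ) + σu ^ 2))
  have hquad (v : Fin n ⊕ Fin d → ℝ) : μ * (v ⬝ᵥ v) ≤ v ⬝ᵥ M *ᵥ v := by
    rw [← Sum.elim_comp_inl_inr v, sumElim_dotProduct_fromBlocks_mulVec_sumElim,
      sumElim_dotProduct_sumElim]
    exact quadForm_add_transpose_mulVec_lower_bound hS.posSemidef K σu _ _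
  have hM : M.IsHermitian := isHermitian_iff_isSymm.2 <|
    isSymm_fromBlocks_mul_transpose (isHermitian_iff_isSymm.1 hS.1) K _
  refine ⟨fun v hv => ?_, (posSemidef_sub_smul_one_iff hM μ).2 hquad⟩
  have hvv : v ⬝ᵥ v = 1 := by simpa [dotProduct, sq] using hv
  simpa [hvv] using hquad v
end

section
/- Let (Ω,F,(F_j)_{j≥0},P) be a filtered probability space and let (z_t)_{t≥1} be a square-integrable (F_t)-adapted process with values in ℝ^m. Let T ≥ k ≥ 1 be integers, ν > 0 and ξ ∈ (0,1], and suppose (z_t) satisfies the (k,ν,ξ)-block martingale small-ball (BMSB) condition up to time T. Then for every unit vector w ∈ ℝ^m, Σ_{t=1}^{k·⌊(T−1)/k⌋} E[⟨w, z_t⟩²] ≥ k·⌊(T−1)/k⌋·ξ²·ν². In particular, the smallest eigenvalue of the matrix E[ Σ_{t=1}^{k⌊(T−1)/k⌋} z_t z_tᵀ ] is at least k·⌊(T−1)/k⌋·ξ²·ν². -/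
open Matrix MeasureTheory

/-!
Integrating the BMSB condition over `Ω` shows that within each block of `k` consecutive times the
events `{ν ≤ |⟨w, z_t⟩|}` have total probability at least `k ξ`, and by Markov's inequality each
such event contributes at least `ν²` times its probability to `E[⟨w, z_t⟩²]`. Summing over the
`⌊(T - 1) / k⌋` disjoint blocks gives the bound even with `ξ` in place of `ξ²`. The quadratic
form of the expected Gram matrix is `x ↦ ∑ₜ E[⟨x, z_t⟩²]`, so by homogeneity the bound on unit
vectors is the eigenvalue bound.
-/

/-- The `(k,ν,ξ)`-block martingale small-ball (BMSB) condition up to time `T` for an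
`ℝ^m`-valued process `z` adapted to the filtration `ℱ`. -/
def BMSB {Ω : Type*} {mΩ : MeasurableSpace Ω} (ℱ : Filtration ℕ mΩ) (P : Measure Ω)
    {m : ℕ} (z : ℕ → Ω → Fin m → ℝ) (T k : ℕ) (ν ξ : ℝ) : Prop :=
  ∀ j : ℕ, j ≤ T - k → ∀ w : Fin m → ℝ, (∑ i, w i ^ 2) = 1 →
    ∀ᵐ ω ∂P, ξ ≤ (1 / (k : ℝ)) * ∑ i ∈ Finset.Icc 1 k,
      (P[Set.indicator {ω' | ν ≤ |w ⬝ᵥ z (j + i) ω'|} (fun _ => (1 : ℝ)) | ℱ j]) ω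

theorem Finset.sum_Icc_one_mul_eq_sum_range_sum_Icc {M : Type*} [AddCommMonoid M] (f : ℕ → M)
    (k N : ℕ) :
    ∑ t ∈ Icc 1 (N * k), f t = ∑ b ∈ range N, ∑ i ∈ Icc 1 k, f (b * k + i) := by
  induction N with
  | zero => simp
  | succ N ih =>
    rw [sum_range_succ, ← ih, add_one_mul]
    change ∑ t ∈ Ioc 0 (N * k + k), f t
      = ∑ t ∈ Ioc 0 (N * k), f t + ∑ i ∈ Ioc 0 k, f (N * k + i)
    rw [← sum_Ioc_consecutive f (Nat.zero_le _) (Nat.le_add_right _ _)]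
    congr 1
    simpa using sum_map (Ioc 0 k) (addLeftEmbedding (N * k)) f

section QuadraticForm

variable {ι : Type*} [Fintype ι]

lemma mul_sum_sq_le_of_forall_sum_sq_eq_one {Q : (ι → ℝ) → ℝ}
    (hQ : ∀ (a : ℝ) x, Q (a • x) = a ^ 2 * Q x) {c : ℝ}
    (h : ∀ w : ι → ℝ, ∑ i, w i ^ 2 = 1 → c ≤ Q w) (x : ι → ℝ) :
    c * ∑ i, x i ^ 2 ≤ Q x := by
  have hsq : ∀ i ∈ Finset.univ, 0 ≤ x i ^ 2 := fun i _ => sq_nonneg (x i)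
  rcases (Finset.sum_nonneg hsq).eq_or_lt with hs | hs
  · have hx : x = 0 := funext fun i => by
      simpa using (Finset.sum_eq_zero_iff_of_nonneg hsq).mp hs.symm i
    rw [← hs, mul_zero, hx, ← zero_smul ℝ (0 : ι → ℝ), hQ, zero_pow two_ne_zero, zero_mul]
  · set s := ∑ i, x i ^ 2
    have hunit : ∑ i, ((√s)⁻¹ • x) i ^ 2 = 1 := by
      simp only [Pi.smul_apply, smul_eq_mul, mul_pow, ← Finset.mul_sum, inv_pow,
        Real.sq_sqrt hs.le]
      exact inv_mul_cancel₀ hs.ne'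
    calc c * s ≤ s * Q ((√s)⁻¹ • x) := by
          rw [mul_comm]; exact mul_le_mul_of_nonneg_left (h _ hunit) hs.le
      _ = Q x := by
          rw [hQ, ← mul_assoc, inv_pow, Real.sq_sqrt hs.le, mul_inv_cancel₀ hs.ne', one_mul]

lemma posSemidef_sub_smul_one_of_le [DecidableEq ι] {M : Matrix ι ι ℝ} (hM : M.IsHermitian)
    {c : ℝ} (h : ∀ x, c * ∑ i, x i ^ 2 ≤ x ⬝ᵥ M *ᵥ x) : (M - c • 1).PosSemidef := by
  refine .of_dotProduct_mulVec_nonneg (hM.sub (isHermitian_one.smul rfl)) fun x => ?_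
  have hxx : x ⬝ᵥ x = ∑ i, x i ^ 2 := by simp [dotProduct, sq]
  simp only [star_trivial, sub_mulVec, smul_mulVec, one_mulVec, dotProduct_sub, dotProduct_smul,
    smul_eq_mul, hxx, sub_nonneg]
  exact h x

lemma dotProduct_sum_vecMulVec_mulVec {κ : Type*} (s : Finset κ) (v : κ → ι → ℝ) (x : ι → ℝ) :
    x ⬝ᵥ (∑ t ∈ s, vecMulVec (v t) (v t)) *ᵥ x = ∑ t ∈ s, (x ⬝ᵥ v t) ^ 2 := by
  simp [sum_mulVec, dotProduct_sum, vecMulVec_mulVec, sq, dotProduct_comm]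

end QuadraticForm

section Integral

variable {Ω : Type*} {mΩ : MeasurableSpace Ω} {P : Measure Ω}

lemma sq_mul_measureReal_le_integral_sq {g : Ω → ℝ} (hg : Integrable (fun ω => g ω ^ 2) P)
    {ν : ℝ} (hν : 0 ≤ ν) : ν ^ 2 * P.real {ω | ν ≤ |g ω|} ≤ ∫ ω, g ω ^ 2 ∂P := by
  have hset : {ω | ν ≤ |g ω|} = {ω | ν ^ 2 ≤ g ω ^ 2} := by
    ext ω
    simp only [Set.mem_ofPred_eq, ← sq_abs (g ω), sq_le_sq₀ hν (abs_nonneg _)]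
  rw [hset]
  exact mul_meas_ge_le_integral_of_nonneg (ae_of_all _ fun ω => sq_nonneg _) hg _

lemma MeasureTheory.MemLp.const_dotProduct {ι : Type*} [Fintype ι] {p : ENNReal}
    {f : Ω → ι → ℝ} (hf : MemLp f p P) (w : ι → ℝ) : MemLp (fun ω => w ⬝ᵥ f ω) p P := by
  simpa [dotProduct] using memLp_finsetSum _ fun i _ => (hf.eval i).const_mul (w i)

lemma dotProduct_of_integral_mulVec {ι : Type*} [Fintype ι] {F : Ω → Matrix ι ι ℝ}
    (hF : ∀ i j, Integrable (fun ω => F ω i j) P) (x : ι → ℝ) :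
    x ⬝ᵥ (of fun i j => ∫ ω, F ω i j ∂P) *ᵥ x = ∫ ω, x ⬝ᵥ F ω *ᵥ x ∂P := by
  simp only [dotProduct, mulVec, of_apply, Finset.mul_sum]
  rw [integral_finsetSum _ fun i _ => integrable_finsetSum _ fun j _ =>
    ((hF i j).mul_const (x j)).const_mul (x i)]
  refine Finset.sum_congr rfl fun i _ => ?_
  rw [integral_finsetSum _ fun j _ => ((hF i j).mul_const (x j)).const_mul (x i)]
  simp only [integral_const_mul, integral_mul_const]

end Integral

namespace BMSB

variable {Ω : Type*} {mΩ : MeasurableSpace Ω} {ℱ : Filtration ℕ mΩ} {P : Measure Ω}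
  [IsProbabilityMeasure P] {m : ℕ} {z : ℕ → Ω → Fin m → ℝ} {T k : ℕ} {ν ξ : ℝ}

theorem mul_le_sum_measureReal_block (h : BMSB ℱ P z T k ν ξ) (hz : ∀ t, Measurable (z t))
    {j : ℕ} (hj : j ≤ T - k) {w : Fin m → ℝ} (hw : ∑ i, w i ^ 2 = 1) :
    k * ξ ≤ ∑ i ∈ Finset.Icc 1 k, P.real {ω | ν ≤ |w ⬝ᵥ z (j + i) ω|} := by
  obtain rfl | hk := Nat.eq_zero_or_pos k
  · simp
  have hA : ∀ i, MeasurableSet {ω | ν ≤ |w ⬝ᵥ z (j + i) ω|} := fun i =>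
    measurableSet_le measurable_const (by fun_prop)
  have hintegrated := integral_mono_ae (integrable_const ξ)
    ((integrable_finsetSum _ fun i _ => integrable_condExp).const_mul _) (h j hj w hw)
  simp only [integral_const, integral_const_mul] at hintegrated
  rw [integral_finsetSum _ fun i _ => integrable_condExp] at hintegrated
  simp only [integral_condExp (ℱ.le j), integral_indicator_const _ (hA _), probReal_univ,
    smul_eq_mul, one_mul, mul_one] at hintegrated
  rwa [one_div, ← div_eq_inv_mul, le_div_iff₀' (by positivity)] at hintegrated

theorem mul_le_sum_integral_sq_block (h : BMSB ℱ P z T k ν ξ) (hz : ∀ t, Measurable (z t))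
    (hL2 : ∀ t, MemLp (z t) 2 P) (hν : 0 ≤ ν) {j : ℕ} (hj : j ≤ T - k) {w : Fin m → ℝ}
    (hw : ∑ i, w i ^ 2 = 1) :
    k * ξ * ν ^ 2 ≤ ∑ i ∈ Finset.Icc 1 k, ∫ ω, (w ⬝ᵥ z (j + i) ω) ^ 2 ∂P :=
  calc k * ξ * ν ^ 2 ≤ ν ^ 2 * ∑ i ∈ Finset.Icc 1 k, P.real {ω | ν ≤ |w ⬝ᵥ z (j + i) ω|} := by
        rw [mul_comm]; gcongr; exact h.mul_le_sum_measureReal_block hz hj hw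
    _ ≤ _ := by
        rw [Finset.mul_sum]
        exact Finset.sum_le_sum fun i _ =>
          sq_mul_measureReal_le_integral_sq ((hL2 _).const_dotProduct w).integrable_sq hν

theorem mul_le_sum_integral_sq (h : BMSB ℱ P z T k ν ξ) (hz : ∀ t, Measurable (z t))
    (hL2 : ∀ t, MemLp (z t) 2 P) (hν : 0 ≤ ν) {N : ℕ} (hN : N * k ≤ T) {w : Fin m → ℝ}
    (hw : ∑ i, w i ^ 2 = 1) :
    ((k * N : ℕ) : ℝ) * ξ * ν ^ 2 ≤ ∑ t ∈ Finset.Icc 1 (k * N), ∫ ω, (w ⬝ᵥ z t ω) ^ 2 ∂P := by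
  rw [mul_comm k N, Finset.sum_Icc_one_mul_eq_sum_range_sum_Icc]
  calc ((N * k : ℕ) : ℝ) * ξ * ν ^ 2 = ∑ _b ∈ Finset.range N, k * ξ * ν ^ 2 := by
        simp only [Finset.sum_const, Finset.card_range, nsmul_eq_mul]; push_cast; ring
    _ ≤ _ := Finset.sum_le_sum fun b hb => h.mul_le_sum_integral_sq_block hz hL2 hν
        (Nat.le_sub_of_add_le (by nlinarith [Finset.mem_range.mp hb])) hw

end BMSB

section Gram

variable {Ω : Type*} {mΩ : MeasurableSpace Ω} {P : Measure Ω} {κ ι : Type*}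

lemma isHermitian_of_integral_sum_mul (z : κ → Ω → ι → ℝ) (s : Finset κ) :
    (of fun i j => ∫ ω, ∑ t ∈ s, z t ω i * z t ω j ∂P).IsHermitian := by
  ext i j
  simp only [conjTranspose_apply, of_apply, star_trivial, mul_comm]

lemma dotProduct_of_integral_sum_mul_mulVec [Fintype ι] {z : κ → Ω → ι → ℝ}
    (hL2 : ∀ t, MemLp (z t) 2 P) (s : Finset κ) (x : ι → ℝ) :
    x ⬝ᵥ (of fun i j => ∫ ω, ∑ t ∈ s, z t ω i * z t ω j ∂P) *ᵥ x
      = ∑ t ∈ s, ∫ ω, (x ⬝ᵥ z t ω) ^ 2 ∂P := by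
  have hentry : ∀ ω i j,
      ∑ t ∈ s, z t ω i * z t ω j = (∑ t ∈ s, vecMulVec (z t ω) (z t ω)) i j :=
    fun ω i j => by simp [Matrix.sum_apply, vecMulVec_apply]
  simp_rw [hentry]
  rw [dotProduct_of_integral_mulVec, ← integral_finsetSum]
  · simp_rw [dotProduct_sum_vecMulVec_mulVec]
  · exact fun t _ => ((hL2 t).const_dotProduct x).integrable_sq
  · intro i j
    simp_rw [← hentry]
    exact integrable_finsetSum _ fun t _ => ((hL2 t).eval i).integrable_mul ((hL2 t).eval j)

end Gram

theorem bmsb_gram_lower_bound_general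
    {Ω : Type*} {mΩ : MeasurableSpace Ω} (ℱ : Filtration ℕ mΩ)
    (P : Measure Ω) [IsProbabilityMeasure P]
    {m : ℕ} (z : ℕ → Ω → Fin m → ℝ)
    (hadapt : ∀ t, StronglyMeasurable[ℱ t] (z t))
    (hL2 : ∀ t, MemLp (z t) 2 P)
    (T k : ℕ)
    (ν ξ : ℝ) (hν : 0 < ν) (hξ0 : 0 < ξ) (hξ1 : ξ ≤ 1)
    (hbmsb : BMSB ℱ P z T k ν ξ) :
    (∀ w : Fin m → ℝ, (∑ i, w i ^ 2) = 1 →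
        ((k * ((T - 1) / k) : ℕ) : ℝ) * ξ ^ 2 * ν ^ 2
          ≤ ∑ t ∈ Finset.Icc 1 (k * ((T - 1) / k)), ∫ ω, (w ⬝ᵥ z t ω) ^ 2 ∂P) ∧
      (Matrix.of (fun i j =>
            ∫ ω, (∑ t ∈ Finset.Icc 1 (k * ((T - 1) / k)), z t ω i * z t ω j) ∂P)
          - (((k * ((T - 1) / k) : ℕ) : ℝ) * ξ ^ 2 * ν ^ 2) • 1).PosSemidef := by
  have hz : ∀ t, Measurable (z t) := fun t => ((hadapt t).mono (ℱ.le t)).measurable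
  have hN : (T - 1) / k * k ≤ T := (Nat.div_mul_le_self _ _).trans (Nat.sub_le _ _)
  have hξ : ξ ^ 2 ≤ ξ := pow_le_of_le_one hξ0.le hξ1 two_ne_zero
  have hunit : ∀ w : Fin m → ℝ, (∑ i, w i ^ 2) = 1 →
      ((k * ((T - 1) / k) : ℕ) : ℝ) * ξ ^ 2 * ν ^ 2
        ≤ ∑ t ∈ Finset.Icc 1 (k * ((T - 1) / k)), ∫ ω, (w ⬝ᵥ z t ω) ^ 2 ∂P := fun w hw =>
    le_trans (by gcongr) (hbmsb.mul_le_sum_integral_sq hz hL2 hν.le hN hw)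
  refine ⟨hunit, posSemidef_sub_smul_one_of_le (isHermitian_of_integral_sum_mul z _) fun x => ?_⟩
  rw [dotProduct_of_integral_sum_mul_mulVec hL2]
  refine mul_sum_sq_le_of_forall_sum_sq_eq_one (fun a x => ?_) hunit x
  simp only [smul_dotProduct, smul_eq_mul, mul_pow, integral_const_mul, Finset.mul_sum]

theorem bmsb_gram_lower_bound
    {Ω : Type*} {mΩ : MeasurableSpace Ω} (ℱ : Filtration ℕ mΩ)
    (P : Measure Ω) [IsProbabilityMeasure P]
    {m : ℕ} (z : ℕ → Ω → Fin m → ℝ)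
    (hadapt : ∀ t, StronglyMeasurable[ℱ t] (z t))
    (hL2 : ∀ t, MemLp (z t) 2 P)
    (T k : ℕ) (hk : 1 ≤ k) (hkT : k ≤ T)
    (ν ξ : ℝ) (hν : 0 < ν) (hξ0 : 0 < ξ) (hξ1 : ξ ≤ 1)
    (hbmsb : BMSB ℱ P z T k ν ξ) :
    (∀ w : Fin m → ℝ, (∑ i, w i ^ 2) = 1 →
        ((k * ((T - 1) / k) : ℕ) : ℝ) * ξ ^ 2 * ν ^ 2
          ≤ ∑ t ∈ Finset.Icc 1 (k * ((T - 1) / k)), ∫ ω, (w ⬝ᵥ z t ω) ^ 2 ∂P) ∧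
      (Matrix.of (fun i j =>
            ∫ ω, (∑ t ∈ Finset.Icc 1 (k * ((T - 1) / k)), z t ω i * z t ω j) ∂P)
          - (((k * ((T - 1) / k) : ℕ) : ℝ) * ξ ^ 2 * ν ^ 2) • 1).PosSemidef :=
  bmsb_gram_lower_bound_general ℱ P z hadapt hL2 T k ν ξ hν hξ0 hξ1 hbmsb
end

section
/- Let (F_n)_{n≥0} be a filtration on a probability space, let (ε_n)_{n≥1} be a square-integrable adapted real-valued process with E[ε_n | F_{n−1}] = 0 almost surely and sup_n E[ε_n² | F_{n−1}] < ∞ almost surely, and let each v_n be a real F_{n−1}-measurable random variable. Write S_n = Σ_{i=1}^n v_i·ε_i and V_n = Σ_{i=1}^n v_i². Then: (i) almost surely on the event { Σ_{i=1}^∞ v_i² < ∞ }, the sequence (S_n) converges to a finite limit; and (ii) for every η > 1/2, almost surely on the event { Σ_{i=1}^∞ v_i² = ∞ }, S_n / ( V_n^{1/2}·(log V_n)^η ) → 0 as n → ∞. -/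
/-!
(i) On the predictable event that up to time `n` the sum `∑ vᵢ²` is at most `M` and the
conditional variances `E[εᵢ² | ℱᵢ₋₁]` are at most `K`, the transform `∑ vᵢ εᵢ` truncated to that
event is a martingale with second moments at most `K M`, hence converges almost surely. Almost
every `ω` with `∑ vᵢ² < ∞` lies in all these events for suitable `M, K ∈ ℕ`.

(ii) With `Vₙ = ∑ᵢ≤ₙ vᵢ²`, the series `∑ (Vᵢ - Vᵢ₋₁) / (Vᵢ (log Vᵢ)^{2η})` converges for `2η > 1`,
so by (i) applied to the weights `vᵢ / (Vᵢ^{1/2} (log Vᵢ)^η)` the series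
`∑ vᵢ εᵢ / (Vᵢ^{1/2} (log Vᵢ)^η)` converges, and Kronecker's lemma turns this into
`Sₙ / (Vₙ^{1/2} (log Vₙ)^η) → 0`.
-/

open MeasureTheory Filter Finset Real Topology Asymptotics

lemma sum_Icc_one_eq_sum_range {M : Type*} [AddCommMonoid M] (f : ℕ → M) (n : ℕ) :
    ∑ i ∈ Icc 1 n, f i = ∑ k ∈ range n, f (k + 1) := by
  induction n with
  | zero => simp
  | succ n ih => rw [sum_Icc_succ_top (by omega), sum_range_succ, ih]

lemma monotone_sum_Icc_one {d : ℕ → ℝ} (hd : ∀ i, 0 ≤ d i) :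
    Monotone fun n => ∑ i ∈ Icc 1 n, d i := fun _ _ hmn =>
  sum_le_sum_of_subset_of_nonneg (Icc_subset_Icc_right hmn) fun i _ _ => hd i

/-- `(t - u) t⁻ˢ` is a lower Riemann sum for `∫ᵤᵗ x⁻ˢ dx`. -/
lemma sub_mul_rpow_neg_le {s u t : ℝ} (hs : 1 < s) (hu : 0 < u) (hut : u ≤ t) :
    (t - u) * t ^ (-s) ≤ (u ^ (1 - s) - t ^ (1 - s)) / (s - 1) := by
  have h0 : (0 : ℝ) ∉ Set.uIcc u t := by
    rw [Set.uIcc_of_le hut]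
    exact fun h => hu.not_ge h.1
  have hint : ∫ x in u..t, x ^ (-s) = (u ^ (1 - s) - t ^ (1 - s)) / (s - 1) := by
    rw [integral_rpow (Or.inr ⟨by linarith, h0⟩), show -s + 1 = 1 - s by ring,
      ← neg_sub s 1, div_neg, ← neg_div, neg_sub]
  rw [← hint]
  calc (t - u) * t ^ (-s) = ∫ _ in u..t, t ^ (-s) := by simp
    _ ≤ ∫ x in u..t, x ^ (-s) :=
      intervalIntegral.integral_mono_on hut intervalIntegrable_const
        (intervalIntegral.intervalIntegrable_rpow (Or.inr h0))
        fun x hx => rpow_le_rpow_of_nonpos (hu.trans_le hx.1) hx.2 (by linarith)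

lemma sub_div_mul_log_rpow_le {s a b : ℝ} (hs : 1 < s) (ha : exp 1 ≤ a) (hab : a ≤ b) :
    (b - a) / (b * log b ^ s) ≤ (log a ^ (1 - s) - log b ^ (1 - s)) / (s - 1) := by
  have ha0 : 0 < a := (exp_pos 1).trans_le ha
  have hb0 : 0 < b := ha0.trans_le hab
  have hloga : 1 ≤ log a := by simpa using log_le_log (exp_pos 1) ha
  have hlogb : 0 < log b := zero_lt_one.trans_le (hloga.trans (log_le_log ha0 hab))
  have hlog : (b - a) / b ≤ log b - log a := by
    have := one_sub_inv_le_log_of_pos (div_pos hb0 ha0)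
    rwa [inv_div, log_div hb0.ne' ha0.ne', one_sub_div hb0.ne'] at this
  calc (b - a) / (b * log b ^ s) = (b - a) / b * log b ^ (-s) := by
        rw [rpow_neg hlogb.le, div_mul_eq_div_div, div_eq_mul_inv _ (log b ^ s)]
    _ ≤ (log b - log a) * log b ^ (-s) := by gcongr
    _ ≤ _ := sub_mul_rpow_neg_le hs (zero_lt_one.trans_le hloga) (log_le_log ha0 hab)

/-- A discrete form of `∫ dx / (x (log x)ˢ) < ∞` (Abel–Dini). -/
lemma sum_sub_div_mul_log_rpow_le {m : ℕ → ℝ} (hm : Monotone m) (hm0 : exp 1 ≤ m 0) {s : ℝ}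
    (hs : 1 < s) (n : ℕ) :
    ∑ k ∈ range n, (m (k + 1) - m k) / (m (k + 1) * log (m (k + 1)) ^ s) ≤ (s - 1)⁻¹ := by
  have hlog : ∀ k, 1 ≤ log (m k) := fun k => by
    simpa using log_le_log (exp_pos 1) (hm0.trans (hm k.zero_le))
  calc _ ≤ ∑ k ∈ range n, (log (m k) ^ (1 - s) - log (m (k + 1)) ^ (1 - s)) / (s - 1) :=
        sum_le_sum fun k _ => sub_div_mul_log_rpow_le hs (hm0.trans (hm k.zero_le)) (hm k.le_succ)
    _ = (log (m 0) ^ (1 - s) - log (m n) ^ (1 - s)) / (s - 1) := by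
        rw [← sum_div, sum_range_sub' (fun k => log (m k) ^ (1 - s))]
    _ ≤ (s - 1)⁻¹ := by
        rw [div_eq_mul_inv]
        have h0 := rpow_le_one_of_one_le_of_nonpos (hlog 0) (by linarith : 1 - s ≤ 0)
        have hn := rpow_nonneg (zero_le_one.trans (hlog n)) (1 - s)
        have := inv_pos.2 (by linarith : 0 < s - 1)
        nlinarith

/-- `√x (log x)^η`, with `x` replaced by `max x e` so that it is positive and monotone;
this does not change it once `x ≥ e`. -/
noncomputable def normalizer (η x : ℝ) : ℝ :=
  max x (exp 1) ^ ((1 : ℝ) / 2) * log (max x (exp 1)) ^ η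

lemma one_le_log_max_exp (x : ℝ) : 1 ≤ log (max x (exp 1)) := by
  simpa using log_le_log (exp_pos 1) (le_max_right x (exp 1))

lemma max_exp_pos (x : ℝ) : 0 < max x (exp 1) := (exp_pos 1).trans_le (le_max_right _ _)

lemma normalizer_pos (η x : ℝ) : 0 < normalizer η x :=
  mul_pos (rpow_pos_of_pos (max_exp_pos x) _)
    (rpow_pos_of_pos (zero_lt_one.trans_le (one_le_log_max_exp x)) _)

lemma normalizer_of_exp_le (η : ℝ) {x : ℝ} (hx : exp 1 ≤ x) :
    normalizer η x = x ^ ((1 : ℝ) / 2) * log x ^ η := by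
  rw [normalizer, max_eq_left hx]

lemma normalizer_sq (η x : ℝ) :
    normalizer η x ^ 2 = max x (exp 1) * log (max x (exp 1)) ^ (2 * η) := by
  rw [normalizer, mul_pow, ← rpow_mul_natCast (max_exp_pos x).le,
    ← rpow_mul_natCast (zero_le_one.trans (one_le_log_max_exp x))]
  norm_num [mul_comm η]

lemma monotone_normalizer {η : ℝ} (hη : 0 ≤ η) : Monotone (normalizer η) := fun x y hxy => by
  have hmax : max x (exp 1) ≤ max y (exp 1) := max_le_max hxy le_rfl
  exact mul_le_mul (rpow_le_rpow (max_exp_pos x).le hmax (by norm_num))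
    (rpow_le_rpow (zero_le_one.trans (one_le_log_max_exp x)) (log_le_log (max_exp_pos x) hmax) hη)
    (rpow_nonneg (zero_le_one.trans (one_le_log_max_exp x)) _) (rpow_nonneg (max_exp_pos y).le _)

lemma tendsto_normalizer_atTop {η : ℝ} (hη : 0 ≤ η) : Tendsto (normalizer η) atTop atTop := by
  refine tendsto_atTop_mono (fun x => ?_)
    ((tendsto_rpow_atTop (by norm_num : (0 : ℝ) < 1 / 2)).comp
      (tendsto_atTop_mono (fun x => le_max_left x (exp 1)) tendsto_id))
  exact le_mul_of_one_le_right (rpow_nonneg (max_exp_pos x).le _)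
    (one_le_rpow (one_le_log_max_exp x) hη)

lemma measurable_normalizer (η : ℝ) : Measurable (normalizer η) := by
  unfold normalizer
  fun_prop

lemma sum_div_normalizer_sq_le {d : ℕ → ℝ} (hd : ∀ i, 0 ≤ d i) {η : ℝ} (hη : 1 / 2 < η)
    (n : ℕ) :
    ∑ i ∈ Icc 1 n, d i / normalizer η (∑ j ∈ Icc 1 i, d j) ^ 2 ≤ (2 * η - 1)⁻¹ + exp 1 := by
  set V : ℕ → ℝ := fun i => ∑ j ∈ Icc 1 i, d j
  set m : ℕ → ℝ := fun i => max (V i) (exp 1)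
  have hV : ∀ k, V (k + 1) = V k + d (k + 1) := fun k => sum_Icc_succ_top (by omega) _
  have hm : Monotone m := fun i j hij => max_le_max (monotone_sum_Icc_one hd hij) le_rfl
  have hm0 : m 0 = exp 1 := by simp [m, V, (exp_pos 1).le]
  have hΔm : ∀ k, m (k + 1) - m k ≤ d (k + 1) := fun k => by
    have : m (k + 1) ≤ m k + d (k + 1) :=
      max_le (by rw [hV]; gcongr; exact le_max_left _ _)
        (le_add_of_le_of_nonneg (le_max_right _ _) (hd _))
    linarith
  -- `d` exceeds the increments of `m` only while `V < e`, by at most `e` in total.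
  have hterm : ∀ k, d (k + 1) / normalizer η (V (k + 1)) ^ 2 ≤
      (m (k + 1) - m k) / (m (k + 1) * log (m (k + 1)) ^ (2 * η))
        + (d (k + 1) - (m (k + 1) - m k)) := fun k => by
    set D := m (k + 1) * log (m (k + 1)) ^ (2 * η)
    have hD : 1 ≤ D := one_le_mul_of_one_le_of_one_le
      ((one_le_exp zero_le_one).trans (le_max_right _ _))
      (one_le_rpow (one_le_log_max_exp _) (by linarith))
    calc d (k + 1) / normalizer η (V (k + 1)) ^ 2
        = (m (k + 1) - m k) / D + (d (k + 1) - (m (k + 1) - m k)) / D := by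
          rw [normalizer_sq, ← add_div, add_sub_cancel]
      _ ≤ _ := by gcongr; exact div_le_self (by linarith [hΔm k]) hD
  calc ∑ i ∈ Icc 1 n, d i / normalizer η (V i) ^ 2
      ≤ ∑ k ∈ range n, ((m (k + 1) - m k) / (m (k + 1) * log (m (k + 1)) ^ (2 * η))
          + (d (k + 1) - (m (k + 1) - m k))) := by
        rw [sum_Icc_one_eq_sum_range]; exact sum_le_sum fun k _ => hterm k
    _ ≤ (2 * η - 1)⁻¹ + (V n - (m n - m 0)) := by
        rw [sum_add_distrib, sum_sub_distrib, sum_range_sub m, ← sum_Icc_one_eq_sum_range]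
        gcongr
        exact sum_sub_div_mul_log_rpow_le hm hm0.ge (by linarith) n
    _ ≤ (2 * η - 1)⁻¹ + exp 1 := by
        have : V n ≤ m n := le_max_left _ _
        linarith

lemma tendsto_sum_range_sub_mul_div {a T : ℕ → ℝ} {L : ℝ} (ha : ∀ n, 0 < a n)
    (hmono : Monotone a) (htop : Tendsto a atTop atTop) (hT : Tendsto T atTop (𝓝 L)) :
    Tendsto (fun n => (∑ i ∈ range n, (a (i + 1) - a i) * T i) / a n) atTop (𝓝 L) := by
  have hΔ : ∀ i, 0 ≤ a (i + 1) - a i := fun i => sub_nonneg.2 (hmono i.le_succ)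
  have hsum : ∀ n, ∑ i ∈ range n, (a (i + 1) - a i) = a n - a 0 := sum_range_sub a
  have herr : (fun n => ∑ i ∈ range n, (a (i + 1) - a i) * (T i - L)) =o[atTop] a := by
    have hlo : (fun i => (a (i + 1) - a i) * (T i - L)) =o[atTop] fun i => a (i + 1) - a i := by
      simpa [mul_comm] using (isBigO_refl (fun i => a (i + 1) - a i) atTop).mul_isLittleO
        ((isLittleO_one_iff ℝ).2 (tendsto_sub_nhds_zero_iff.2 hT))
    refine (hlo.sum_range hΔ ?_).trans_isBigO (isBigO_of_le _ fun n => ?_)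
    · rw [funext hsum]
      simp only [sub_eq_add_neg]
      exact tendsto_atTop_add_const_right _ _ htop
    · rw [hsum, Real.norm_of_nonneg (sub_nonneg.2 (hmono n.zero_le)), Real.norm_of_nonneg (ha n).le]
      linarith [ha 0]
  have heq : ∀ n, (∑ i ∈ range n, (a (i + 1) - a i) * T i) / a n
      = (∑ i ∈ range n, (a (i + 1) - a i) * (T i - L)) / a n + L - a 0 * L * (a n)⁻¹ := fun n => by
    have : ∑ i ∈ range n, (a (i + 1) - a i) * T i
        = ∑ i ∈ range n, (a (i + 1) - a i) * (T i - L) + (a n - a 0) * L := by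
      rw [← hsum, sum_mul, ← sum_add_distrib]
      exact sum_congr rfl fun i _ => by ring
    field_simp [(ha n).ne']
    rw [this]; ring
  have hlim := (herr.tendsto_div_nhds_zero.add_const L).sub
    (htop.inv_tendsto_atTop.const_mul (a 0 * L))
  rw [zero_add, mul_zero, sub_zero] at hlim
  exact hlim.congr fun n => (heq n).symm

/-- Kronecker's lemma. -/
lemma tendsto_sum_mul_div_of_tendsto_sum {a b : ℕ → ℝ} {L : ℝ} (ha : ∀ n, 0 < a n)
    (hmono : Monotone a) (htop : Tendsto a atTop atTop)
    (hb : Tendsto (fun n => ∑ i ∈ Icc 1 n, b i) atTop (𝓝 L)) :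
    Tendsto (fun n => (∑ i ∈ Icc 1 n, a i * b i) / a n) atTop (𝓝 0) := by
  set T : ℕ → ℝ := fun n => ∑ i ∈ Icc 1 n, b i
  have habel : ∀ n, ∑ i ∈ Icc 1 n, a i * b i
      = a n * T n - ∑ i ∈ range n, (a (i + 1) - a i) * T i := fun n => by
    induction n with
    | zero => simp [T]
    | succ n ih =>
      rw [sum_Icc_succ_top (by omega), ih, sum_range_succ,
        show T (n + 1) = T n + b (n + 1) from sum_Icc_succ_top (by omega) _]
      ring
  have heq : ∀ n, (∑ i ∈ Icc 1 n, a i * b i) / a n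
      = T n - (∑ i ∈ range n, (a (i + 1) - a i) * T i) / a n := fun n => by
    rw [habel, sub_div, mul_div_cancel_left₀ _ (ha n).ne']
  simpa only [heq, sub_self] using hb.sub (tendsto_sum_range_sub_mul_div ha hmono htop hb)

lemma tendsto_sum_mul_div_sqrt_mul_log_rpow {v x : ℕ → ℝ} {η : ℝ} (hη : 0 ≤ η)
    (hV : Tendsto (fun n => ∑ i ∈ Icc 1 n, v i ^ 2) atTop atTop) {S : ℝ}
    (hS : Tendsto (fun n => ∑ i ∈ Icc 1 n, v i / normalizer η (∑ j ∈ Icc 1 i, v j ^ 2) * x i)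
      atTop (𝓝 S)) :
    Tendsto (fun n => (∑ i ∈ Icc 1 n, v i * x i) /
      ((∑ i ∈ Icc 1 n, v i ^ 2) ^ ((1 : ℝ) / 2) * log (∑ i ∈ Icc 1 n, v i ^ 2) ^ η))
      atTop (𝓝 0) := by
  have hK := tendsto_sum_mul_div_of_tendsto_sum (fun n => normalizer_pos η _)
    ((monotone_normalizer hη).comp (monotone_sum_Icc_one fun i => sq_nonneg (v i)))
    ((tendsto_normalizer_atTop hη).comp hV) hS
  have hab : ∀ i, normalizer η (∑ j ∈ Icc 1 i, v j ^ 2) *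
      (v i / normalizer η (∑ j ∈ Icc 1 i, v j ^ 2) * x i) = v i * x i := fun i => by
    field_simp [(normalizer_pos η _).ne']
  simp only [hab] at hK
  refine hK.congr' ?_
  filter_upwards [hV.eventually_ge_atTop (exp 1)] with n hn
  rw [normalizer_of_exp_le η hn]

section Martingale

variable {Ω : Type*} {mΩ : MeasurableSpace Ω} {ℱ : Filtration ℕ mΩ} {P : Measure Ω}

lemma integral_mul_condExp {m : MeasurableSpace Ω} (hm : m ≤ mΩ) [SigmaFinite (P.trim hm)]
    {X Y : Ω → ℝ} (hX : StronglyMeasurable[m] X) (hXY : Integrable (X * Y) P)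
    (hY : Integrable Y P) :
    ∫ ω, X ω * (P[Y | m]) ω ∂P = ∫ ω, X ω * Y ω ∂P := by
  calc ∫ ω, X ω * (P[Y | m]) ω ∂P = ∫ ω, (P[X * Y | m]) ω ∂P :=
        integral_congr_ae (condExp_mul_of_stronglyMeasurable_left hX hXY hY).symm
    _ = ∫ ω, X ω * Y ω ∂P := integral_condExp hm

variable [IsFiniteMeasure P]

lemma integral_mul_sq_le_of_condExp_sq_le {m : MeasurableSpace Ω} (hm : m ≤ mΩ)
    [SigmaFinite (P.trim hm)] {X Y : Ω → ℝ} (hX : StronglyMeasurable[m] X) {M K : ℝ}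
    (hXM : ∀ ω, X ω ^ 2 ≤ M) (hY : MemLp Y 2 P)
    (hK : ∀ ω, X ω ^ 2 * (P[fun ω' => Y ω' ^ 2 | m]) ω ≤ K * X ω ^ 2) :
    ∫ ω, (X ω * Y ω) ^ 2 ∂P ≤ K * ∫ ω, X ω ^ 2 ∂P := by
  have hX2 := ((hX.mono hm).pow 2).aestronglyMeasurable (μ := P)
  have hY2 : Integrable (fun ω => Y ω ^ 2) P := hY.integrable_sq
  have hbdd : ∀ᵐ ω ∂P, ‖X ω ^ 2‖ ≤ M := .of_forall fun ω => by simpa using hXM ω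
  calc ∫ ω, (X ω * Y ω) ^ 2 ∂P = ∫ ω, X ω ^ 2 * Y ω ^ 2 ∂P := by simp only [mul_pow]
    _ = ∫ ω, X ω ^ 2 * (P[fun ω' => Y ω' ^ 2 | m]) ω ∂P :=
        (integral_mul_condExp hm (hX.pow 2) (hY2.bdd_mul hX2 hbdd) hY2).symm
    _ ≤ ∫ ω, K * X ω ^ 2 ∂P :=
        integral_mono (integrable_condExp.bdd_mul hX2 hbdd)
          ((Integrable.of_bound hX2 M hbdd).const_mul K) hK
    _ = K * ∫ ω, X ω ^ 2 ∂P := integral_const_mul _ _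

/-- Martingale increments are orthogonal to the past. -/
lemma MeasureTheory.Martingale.integral_sq_succ {g : ℕ → Ω → ℝ} (hg : Martingale g ℱ P)
    (hL2 : ∀ n, MemLp (g n) 2 P) (n : ℕ) :
    ∫ ω, g (n + 1) ω ^ 2 ∂P = ∫ ω, g n ω ^ 2 ∂P + ∫ ω, (g (n + 1) ω - g n ω) ^ 2 ∂P := by
  have hΔ : MemLp (g (n + 1) - g n) 2 P := (hL2 (n + 1)).sub (hL2 n)
  have hcross : ∫ ω, g n ω * (g (n + 1) - g n) ω ∂P = 0 := by
    have hzero : P[g (n + 1) - g n | ℱ n] =ᵐ[P] 0 := by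
      filter_upwards [condExp_sub ((hL2 (n + 1)).integrable one_le_two)
        ((hL2 n).integrable one_le_two) (ℱ n), hg.condExp_ae_eq n.le_succ] with ω h1 h2
      rw [h1, Pi.sub_apply, h2, condExp_of_stronglyMeasurable (ℱ.le n) (hg.stronglyAdapted n)
        ((hL2 n).integrable one_le_two), sub_self, Pi.zero_apply]
    rw [← integral_mul_condExp (ℱ.le n) (hg.stronglyAdapted n) ((hL2 n).integrable_mul hΔ)
      (hΔ.integrable one_le_two)]
    exact integral_eq_zero_of_ae (hzero.mono fun ω h => by simp [h])
  have hsq : ∀ ω, g (n + 1) ω ^ 2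
      = g n ω ^ 2 + (2 * (g n ω * (g (n + 1) - g n) ω) + (g (n + 1) ω - g n ω) ^ 2) := fun ω => by
    simp only [Pi.sub_apply]; ring
  have hI : Integrable (fun ω => g n ω * (g (n + 1) - g n) ω) P := (hL2 n).integrable_mul hΔ
  have hI' : Integrable (fun ω => (g (n + 1) ω - g n ω) ^ 2) P := hΔ.integrable_sq
  have hI2 : Integrable
      (fun ω => 2 * (g n ω * (g (n + 1) - g n) ω) + (g (n + 1) ω - g n ω) ^ 2) P :=
    (hI.const_mul 2).add hI'
  simp_rw [hsq]
  rw [integral_add (hL2 n).integrable_sq hI2,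
    integral_add (hI.const_mul 2) hI', integral_const_mul, hcross, mul_zero, zero_add]

lemma MeasureTheory.Martingale.integral_sq_eq_add_sum {g : ℕ → Ω → ℝ} (hg : Martingale g ℱ P)
    (hL2 : ∀ n, MemLp (g n) 2 P) (n : ℕ) :
    ∫ ω, g n ω ^ 2 ∂P = ∫ ω, g 0 ω ^ 2 ∂P + ∑ k ∈ range n, ∫ ω, (g (k + 1) ω - g k ω) ^ 2 ∂P := by
  induction n with
  | zero => simp
  | succ n ih => rw [hg.integral_sq_succ hL2, ih, sum_range_succ, add_assoc]

lemma MeasureTheory.Martingale.ae_exists_tendsto_of_integral_sq_le {g : ℕ → Ω → ℝ}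
    (hg : Martingale g ℱ P) (hL2 : ∀ n, MemLp (g n) 2 P) {C : ℝ} (hC : ∀ n, ∫ ω, g n ω ^ 2 ∂P ≤ C) :
    ∀ᵐ ω ∂P, ∃ S, Tendsto (fun n => g n ω) atTop (𝓝 S) := by
  refine hg.submartingale.exists_ae_tendsto_of_bdd (R := (P.real Set.univ + C).toNNReal) fun n => ?_
  have hint := (hL2 n).integrable one_le_two
  rw [eLpNorm_one_eq_lintegral_enorm, ← ofReal_integral_norm_eq_lintegral_enorm hint]
  refine ENNReal.ofReal_le_ofReal ?_
  -- `|x| ≤ 1 + x²`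
  calc ∫ ω, ‖g n ω‖ ∂P ≤ ∫ ω, (1 + g n ω ^ 2) ∂P :=
        integral_mono hint.norm ((integrable_const 1).add (hL2 n).integrable_sq) fun ω => by
          simp only [Real.norm_eq_abs]
          nlinarith [sq_nonneg (|g n ω| - 1), sq_abs (g n ω)]
    _ = P.real Set.univ + ∫ ω, g n ω ^ 2 ∂P := by
        rw [integral_add (integrable_const 1) (hL2 n).integrable_sq]; simp
    _ ≤ P.real Set.univ + C := by linarith [hC n]

end Martingale

lemma stronglyMeasurable_sum_Icc_one {Ω : Type*} {m : MeasurableSpace Ω} {f : ℕ → Ω → ℝ}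
    {n : ℕ} (hf : ∀ k < n, StronglyMeasurable[m] (f (k + 1))) :
    StronglyMeasurable[m] fun ω => ∑ i ∈ Icc 1 n, f i ω := by
  simp only [sum_Icc_one_eq_sum_range]
  exact Finset.stronglyMeasurable_fun_sum _ fun k hk => hf k (mem_range.1 hk)

section Transform

variable {Ω : Type*} {mΩ : MeasurableSpace Ω} {ℱ : Filtration ℕ mΩ} {P : Measure Ω}
  {ε : ℕ → Ω → ℝ}

lemma sum_indicator_sq_le_of_antitone {A : ℕ → Set Ω} (hA : Antitone A) {w : ℕ → Ω → ℝ}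
    {M : ℝ} (hM : 0 ≤ M) (hAM : ∀ n, ∀ ω ∈ A n, ∑ i ∈ Icc 1 n, w i ω ^ 2 ≤ M) (n : ℕ) (ω : Ω) :
    ∑ i ∈ Icc 1 n, (A i).indicator (w i) ω ^ 2 ≤ M := by
  induction n with
  | zero => simpa using hM
  | succ n ih =>
    by_cases hω : ω ∈ A (n + 1)
    · refine le_of_eq_of_le (sum_congr rfl fun i hi => ?_) (hAM (n + 1) ω hω)
      rw [Set.indicator_of_mem (hA (mem_Icc.1 hi).2 hω)]
    · rwa [sum_Icc_succ_top (by omega), Set.indicator_of_notMem hω, zero_pow two_ne_zero,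
        add_zero]

variable (ℱ P ε) in
def localizingSet (w : ℕ → Ω → ℝ) (M K : ℝ) (n : ℕ) : Set Ω :=
  {ω | ∑ i ∈ Icc 1 n, w i ω ^ 2 ≤ M ∧
    ∀ k < n, (P[fun ω' => ε (k + 1) ω' ^ 2 | ℱ k]) ω ≤ K}

lemma antitone_localizingSet (w : ℕ → Ω → ℝ) (M K : ℝ) :
    Antitone (localizingSet ℱ P ε w M K) := fun _ _ hmn _ hω =>
  ⟨(monotone_sum_Icc_one (fun _ => sq_nonneg _) hmn).trans hω.1,
    fun k hk => hω.2 k (hk.trans_le hmn)⟩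

lemma measurableSet_localizingSet {w : ℕ → Ω → ℝ} (hw : ∀ n, StronglyMeasurable[ℱ n] (w (n + 1)))
    (M K : ℝ) (n : ℕ) : MeasurableSet[ℱ n] (localizingSet ℱ P ε w M K (n + 1)) := by
  have hV : StronglyMeasurable[ℱ n] fun ω => ∑ i ∈ Icc 1 (n + 1), w i ω ^ 2 :=
    stronglyMeasurable_sum_Icc_one fun k hk => ((hw k).mono (ℱ.mono (by omega))).pow 2
  have hK : MeasurableSet[ℱ n]
      (⋂ k ∈ range (n + 1), {ω | (P[fun ω' => ε (k + 1) ω' ^ 2 | ℱ k]) ω ≤ K}) :=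
    Finset.measurableSet_biInter _ fun k hk => measurableSet_le
      (stronglyMeasurable_condExp.mono (ℱ.mono (by simpa [Nat.lt_succ_iff] using hk))).measurable
      measurable_const
  convert (measurableSet_le hV.measurable (measurable_const (a := M))).inter hK using 1
  ext ω
  simp [localizingSet]

variable [IsProbabilityMeasure P]

/-- The transform `∑ wᵢ εᵢ` is a martingale with `E[(∑ wᵢ εᵢ)²] ≤ K M`. -/
lemma ae_exists_tendsto_sum_mul_of_sum_sq_le (hε : ∀ n, StronglyMeasurable[ℱ n] (ε n))
    (hL2 : ∀ n, MemLp (ε n) 2 P) (hmart : ∀ n, P[ε (n + 1) | ℱ n] =ᵐ[P] 0)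
    {w : ℕ → Ω → ℝ} (hw : ∀ n, StronglyMeasurable[ℱ n] (w (n + 1))) {M K : ℝ} (hK : 0 ≤ K)
    (hwM : ∀ n ω, ∑ i ∈ Icc 1 n, w i ω ^ 2 ≤ M)
    (hwK : ∀ n ω, w (n + 1) ω ^ 2 * (P[fun ω' => ε (n + 1) ω' ^ 2 | ℱ n]) ω ≤ K * w (n + 1) ω ^ 2) :
    ∀ᵐ ω ∂P, ∃ S, Tendsto (fun n => ∑ i ∈ Icc 1 n, w i ω * ε i ω) atTop (𝓝 S) := by
  set g : ℕ → Ω → ℝ := fun n ω => ∑ i ∈ Icc 1 n, w i ω * ε i ω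
  have hw0 : ∀ n, StronglyMeasurable (w (n + 1)) := fun n => (hw n).mono (ℱ.le n)
  have hwsq : ∀ n ω, w (n + 1) ω ^ 2 ≤ M := fun n ω =>
    (single_le_sum (f := fun i => w i ω ^ 2) (fun i _ => sq_nonneg _)
      (mem_Icc.2 ⟨by omega, le_rfl⟩)).trans (hwM (n + 1) ω)
  have hwsqInt : ∀ n, Integrable (fun ω => w (n + 1) ω ^ 2) P := fun n =>
    .of_bound ((hw0 n).pow 2).aestronglyMeasurable M
      (.of_forall fun ω => by simpa using hwsq n ω)
  have hwε : ∀ n, MemLp (fun ω => w (n + 1) ω * ε (n + 1) ω) 2 P := fun n =>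
    (hL2 (n + 1)).of_le_mul (c := √M)
      ((hw0 n).aestronglyMeasurable.mul ((hε (n + 1)).mono (ℱ.le _)).aestronglyMeasurable)
      (.of_forall fun ω => by
        rw [norm_mul]
        gcongr
        simpa [Real.norm_eq_abs] using Real.abs_le_sqrt (hwsq n ω))
  have hgsucc : ∀ n, g (n + 1) = g n + fun ω => w (n + 1) ω * ε (n + 1) ω := fun n =>
    funext fun ω => sum_Icc_succ_top (by omega) _
  have hgL2 : ∀ n, MemLp (g n) 2 P := fun n => by
    induction n with
    | zero => simp [g]
    | succ n ih => rw [hgsucc]; exact ih.add (hwε n)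
  have hg : Martingale g ℱ P := by
    refine martingale_of_condExp_sub_eq_zero_nat
      (fun n => stronglyMeasurable_sum_Icc_one fun k hk =>
        ((hw k).mono (ℱ.mono (by omega))).mul ((hε (k + 1)).mono (ℱ.mono (by omega))))
      (fun n => (hgL2 n).integrable one_le_two) fun n => ?_
    rw [hgsucc, add_sub_cancel_left]
    filter_upwards [condExp_mul_of_stronglyMeasurable_left (hw n)
      ((hwε n).integrable one_le_two) ((hL2 (n + 1)).integrable one_le_two), hmart n] with ω h1 h2
    simp [show (fun ω => w (n + 1) ω * ε (n + 1) ω) = w (n + 1) * ε (n + 1) from rfl, h1, h2]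
  have hincr : ∀ n, ∫ ω, (g (n + 1) ω - g n ω) ^ 2 ∂P ≤ K * ∫ ω, w (n + 1) ω ^ 2 ∂P := fun n => by
    simpa only [hgsucc, Pi.add_apply, add_sub_cancel_left] using
      integral_mul_sq_le_of_condExp_sq_le (ℱ.le n) (hw n) (hwsq n) (hL2 (n + 1)) (hwK n)
  refine hg.ae_exists_tendsto_of_integral_sq_le hgL2 (C := K * M) fun n => ?_
  calc ∫ ω, g n ω ^ 2 ∂P = ∑ k ∈ range n, ∫ ω, (g (k + 1) ω - g k ω) ^ 2 ∂P := by
        simp [hg.integral_sq_eq_add_sum hgL2 n, g]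
    _ ≤ ∑ k ∈ range n, K * ∫ ω, w (k + 1) ω ^ 2 ∂P := sum_le_sum fun k _ => hincr k
    _ = K * ∫ ω, ∑ i ∈ Icc 1 n, w i ω ^ 2 ∂P := by
        simp only [sum_Icc_one_eq_sum_range, integral_finsetSum _ fun k _ => hwsqInt k, mul_sum]
    _ ≤ K * M := by
        gcongr
        calc ∫ ω, ∑ i ∈ Icc 1 n, w i ω ^ 2 ∂P ≤ ∫ _, M ∂P :=
              integral_mono_of_nonneg (.of_forall fun ω => sum_nonneg fun i _ => sq_nonneg _)
                (integrable_const M) (.of_forall (hwM n))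
          _ = M := by simp

lemma ae_exists_tendsto_sum_mul_of_bddAbove (hε : ∀ n, StronglyMeasurable[ℱ n] (ε n))
    (hL2 : ∀ n, MemLp (ε n) 2 P) (hmart : ∀ n, P[ε (n + 1) | ℱ n] =ᵐ[P] 0)
    (hbddcond : ∀ᵐ ω ∂P,
      BddAbove (Set.range fun n : ℕ => (P[fun ω' => ε (n + 1) ω' ^ 2 | ℱ n]) ω))
    {w : ℕ → Ω → ℝ} (hw : ∀ n, StronglyMeasurable[ℱ n] (w (n + 1))) :
    ∀ᵐ ω ∂P, BddAbove (Set.range fun n => ∑ i ∈ Icc 1 n, w i ω ^ 2) →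
      ∃ S, Tendsto (fun n => ∑ i ∈ Icc 1 n, w i ω * ε i ω) atTop (𝓝 S) := by
  set A := localizingSet ℱ P ε w
  have hloc : ∀ M K : ℕ, ∀ᵐ ω ∂P, ∃ S, Tendsto
      (fun n => ∑ i ∈ Icc 1 n, (A M K i).indicator (w i) ω * ε i ω) atTop (𝓝 S) := fun M K =>
    ae_exists_tendsto_sum_mul_of_sum_sq_le hε hL2 hmart
      (fun n => (hw n).indicator (measurableSet_localizingSet hw M K n)) K.cast_nonneg
      (sum_indicator_sq_le_of_antitone (antitone_localizingSet w M K) M.cast_nonneg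
        fun n ω hω => hω.1)
      fun n ω => by
        by_cases hω : ω ∈ A M K (n + 1)
        · rw [Set.indicator_of_mem hω, mul_comm (K : ℝ)]
          exact mul_le_mul_of_nonneg_left (hω.2 n n.lt_succ_self) (sq_nonneg _)
        · simp [Set.indicator_of_notMem hω]
  filter_upwards [ae_all_iff.2 fun M => ae_all_iff.2 (hloc M), hbddcond]
    with ω hω ⟨K, hK⟩ ⟨M, hM⟩
  obtain ⟨M', hM'⟩ := exists_nat_ge M
  obtain ⟨K', hK'⟩ := exists_nat_ge K
  have hA : ∀ i, ω ∈ A M' K' i := fun i =>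
    ⟨(hM ⟨i, rfl⟩).trans hM', fun k _ => (hK ⟨k, rfl⟩).trans hK'⟩
  simpa [Set.indicator_of_mem (hA _)] using hω M' K'

end Transform

theorem lai_wei_martingale_lemma
    {Ω : Type*} {mΩ : MeasurableSpace Ω} (ℱ : Filtration ℕ mΩ)
    (P : Measure Ω) [IsProbabilityMeasure P]
    (ε : ℕ → Ω → ℝ)
    (hadapt : ∀ n, StronglyMeasurable[ℱ n] (ε n))
    (hL2 : ∀ n, MemLp (ε n) 2 P)
    (hmart : ∀ n : ℕ, ∀ᵐ ω ∂P, (P[ε (n + 1) | ℱ n]) ω = 0)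
    (hbddcond : ∀ᵐ ω ∂P,
      BddAbove (Set.range fun n : ℕ => (P[fun ω' => ε (n + 1) ω' ^ 2 | ℱ n]) ω))
    (v : ℕ → Ω → ℝ)
    (hv : ∀ n : ℕ, StronglyMeasurable[ℱ n] (v (n + 1))) :
    (∀ᵐ ω ∂P,
        BddAbove (Set.range fun n : ℕ => ∑ i ∈ Finset.Icc 1 n, v i ω ^ 2) →
          ∃ S : ℝ,
            Tendsto (fun n : ℕ => ∑ i ∈ Finset.Icc 1 n, v i ω * ε i ω) atTop (nhds S)) ∧
      (∀ η : ℝ, 1 / 2 < η →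
        ∀ᵐ ω ∂P,
          ¬ BddAbove (Set.range fun n : ℕ => ∑ i ∈ Finset.Icc 1 n, v i ω ^ 2) →
            Tendsto
              (fun n : ℕ =>
                (∑ i ∈ Finset.Icc 1 n, v i ω * ε i ω) /
                  ((∑ i ∈ Finset.Icc 1 n, v i ω ^ 2) ^ ((1 : ℝ) / 2) *
                    Real.log (∑ i ∈ Finset.Icc 1 n, v i ω ^ 2) ^ η))
              atTop (nhds 0)) := by
  refine ⟨ae_exists_tendsto_sum_mul_of_bddAbove hadapt hL2 hmart hbddcond hv, fun η hη => ?_⟩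
  set w : ℕ → Ω → ℝ := fun i ω => v i ω / normalizer η (∑ j ∈ Icc 1 i, v j ω ^ 2)
  have hw : ∀ n, StronglyMeasurable[ℱ n] (w (n + 1)) := fun n =>
    ((hv n).measurable.div ((measurable_normalizer η).comp (stronglyMeasurable_sum_Icc_one
      fun k _ => ((hv k).mono (ℱ.mono (by omega))).pow 2).measurable)).stronglyMeasurable
  filter_upwards [ae_exists_tendsto_sum_mul_of_bddAbove hadapt hL2 hmart hbddcond hw]
    with ω hconv hunbdd
  have hw2 : BddAbove (Set.range fun n => ∑ i ∈ Icc 1 n, w i ω ^ 2) := by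
    refine ⟨(2 * η - 1)⁻¹ + exp 1, Set.forall_mem_range.2 fun n => ?_⟩
    simpa only [w, div_pow] using sum_div_normalizer_sq_le (fun i => sq_nonneg (v i ω)) hη n
  obtain ⟨S, hS⟩ := hconv hw2
  exact tendsto_sum_mul_div_sqrt_mul_log_rpow (by linarith)
    (tendsto_atTop_atTop_of_monotone' (monotone_sum_Icc_one fun i => sq_nonneg _) hunbdd) hS
end
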